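/- arXiv:2303.02790 — 6 statements merged into one kernel-verified Lean document; each statement's English description precedes it below -/
import Mathlib

section
/- Let H be a complex inner product space, let n be a natural number, and let A_1,...,A_n and B_1,...,B_n be vectors in H. Let M be the n×n complex matrix with entries M_{ij} = ⟨A_i, B_j⟩. Then |det M| ≤ ∏_{i=1}^n ‖A_i‖ · ‖B_i‖. -/
/-!
Expanding both families in an orthonormal basis `b` factors the matrix of inner products as
`(b.toMatrix v)ᴴ * b.toMatrix w`, so it suffices to bound `‖b.det v‖` by `∏ ‖v i‖` (Hadamard).
Changing `b` to the Gram–Schmidt basis of `v` costs a unimodular factor and makes the coordinate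
matrix upper triangular, with diagonal entries `⟪g i, v i⟫` of norm at most `‖v i‖`.
An orthonormal basis of the right size exists after projecting `v` onto `span w`, which changes
no entry; if `w` is linearly dependent, the columns of the matrix are dependent and `det = 0`.
-/

open Module Matrix InnerProductSpace

section

variable (𝕜 : Type*) {E ι : Type*} [RCLike 𝕜] [NormedAddCommGroup E] [InnerProductSpace 𝕜 E]
  [Fintype ι] [DecidableEq ι]

local notation "⟪" x ", " y "⟫" => inner 𝕜 x y

def innerMatrix (v w : ι → E) : Matrix ι ι 𝕜 := of fun i j => ⟪v i, w j⟫

variable {𝕜}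

theorem OrthonormalBasis.norm_det_le_prod_norm [LinearOrder ι] [LocallyFiniteOrderBot ι]
    (b : OrthonormalBasis ι 𝕜 E) (v : ι → E) : ‖b.toBasis.det v‖ ≤ ∏ i, ‖v i‖ := by
  have := b.toBasis.finiteDimensional_of_finite
  have hdim : finrank 𝕜 E = Fintype.card ι := finrank_eq_card_basis b.toBasis
  set g := gramSchmidtOrthonormalBasis hdim v
  have hfactor : b.toBasis.det v = b.toBasis.det g * g.toBasis.det v := by
    rw [Basis.det_apply, Basis.det_apply, Basis.det_apply, ← det_mul,
      ← OrthonormalBasis.coe_toBasis, Basis.toMatrix_mul_toMatrix]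
  rw [hfactor, norm_mul, b.det_to_matrix_orthonormalBasis g, one_mul,
    gramSchmidtOrthonormalBasis_det, norm_prod]
  gcongr with i
  simpa [g.orthonormal.1 i] using norm_inner_le_norm (𝕜 := 𝕜) (g i) (v i)

theorem OrthonormalBasis.det_innerMatrix (b : OrthonormalBasis ι 𝕜 E) (v w : ι → E) :
    (innerMatrix 𝕜 v w).det = star (b.toBasis.det v) * b.toBasis.det w := by
  have hfactor : innerMatrix 𝕜 v w = (b.toBasis.toMatrix v)ᴴ * b.toBasis.toMatrix w := by
    ext i j
    simp [innerMatrix, mul_apply, Basis.toMatrix_apply, b.repr_apply_apply,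
      b.sum_inner_mul_inner]
  rw [hfactor, det_mul, det_conjTranspose, Basis.det_apply, Basis.det_apply]

theorem OrthonormalBasis.norm_det_innerMatrix_le [LinearOrder ι] [LocallyFiniteOrderBot ι]
    (b : OrthonormalBasis ι 𝕜 E) (v w : ι → E) :
    ‖(innerMatrix 𝕜 v w).det‖ ≤ ∏ i, ‖v i‖ * ‖w i‖ := by
  rw [b.det_innerMatrix, norm_mul, norm_star, Finset.prod_mul_distrib]
  gcongr
  exacts [b.norm_det_le_prod_norm v, b.norm_det_le_prod_norm w]

theorem det_innerMatrix_eq_zero_of_not_linearIndependent (v : ι → E) {w : ι → E}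
    (hw : ¬LinearIndependent 𝕜 w) : (innerMatrix 𝕜 v w).det = 0 := by
  obtain ⟨c, hc, i₀, hci₀⟩ := Fintype.not_linearIndependent_iff.mp hw
  rw [← exists_mulVec_eq_zero_iff]
  refine ⟨c, fun h => hci₀ (congrFun h i₀), funext fun i => ?_⟩
  calc (innerMatrix 𝕜 v w *ᵥ c) i = ⟪v i, ∑ j, c j • w j⟫ := by
        simp [innerMatrix, mulVec, dotProduct, inner_sum, inner_smul_right, mul_comm]
    _ = 0 := by rw [hc, inner_zero_right]

theorem norm_det_innerMatrix_le [LinearOrder ι] [LocallyFiniteOrderBot ι] (v w : ι → E) :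
    ‖(innerMatrix 𝕜 v w).det‖ ≤ ∏ i, ‖v i‖ * ‖w i‖ := by
  by_cases hw : LinearIndependent 𝕜 w
  · set K := Submodule.span 𝕜 (Set.range w)
    have : FiniteDimensional 𝕜 K := .span_of_finite 𝕜 (Set.finite_range w)
    have hdim : finrank 𝕜 K = Fintype.card ι := finrank_span_eq_card hw
    let wK (j : ι) : K := ⟨w j, Submodule.subset_span ⟨j, rfl⟩⟩
    have hproj : innerMatrix 𝕜 v w = innerMatrix 𝕜 (K.orthogonalProjectionOnto ∘ v) wK := by
      ext i j
      simp [innerMatrix, wK]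
    rw [hproj]
    refine ((gramSchmidtOrthonormalBasis hdim wK).norm_det_innerMatrix_le _ _).trans ?_
    gcongr with i
    exacts [K.norm_orthogonalProjectionOnto_apply_le (v i), le_rfl]
  · rw [det_innerMatrix_eq_zero_of_not_linearIndependent v hw, norm_zero]
    positivity

end

/-- **Gram–Hadamard inequality.** For a square matrix whose entries are inner products
`M i j = ⟪A i, B j⟫` of vectors in a complex inner product space, the determinant is bounded
by the product of the norms of the vectors. -/
theorem gram_hadamard_inequality {H : Type*} [NormedAddCommGroup H] [InnerProductSpace ℂ H]
    (n : ℕ) (A B : Fin n → H) (M : Matrix (Fin n) (Fin n) ℂ)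
    (hM : ∀ i j, M i j = (inner ℂ (A i) (B j) : ℂ)) :
    ‖M.det‖ ≤ ∏ i : Fin n, ‖A i‖ * ‖B i‖ := by
  have hM' : M = innerMatrix ℂ A B := ext hM
  exact hM' ▸ norm_det_innerMatrix_le A B
end

section
/- Let Λ be a nonempty finite set, n ≥ 2 a natural number, g : Λ × Λ → ℝ a symmetric function with nonnegative values, and let T be a tree (a connected acyclic simple graph) on the vertex set {1,...,n}. Then for every fixed x_1 ∈ Λ, the sum over all (x_2,...,x_n) ∈ Λ^{n-1} of the product over the edges {i,j} of T of g(x_i,x_j) is at most G^{n-1}, where G = max_{x∈Λ} Σ_{y∈Λ} g(x,y). -/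
/-!
Root the tree at `0` and send every other vertex `i` to its parent `p i`, a neighbour closer to
the root. Then `i ↦ s(p i, i)` is a bijection onto the edges (injective because the distance
drops, onto because a tree on `n` vertices has `n - 1` edges), so the summand is
`∏_{i ≠ 0} g (x (p i), x i)`. Summing out the position of a deepest vertex, which is nobody's
parent, removes exactly one factor and costs at most the maximal row sum `G`; induction on the
set of free vertices gives `G ^ (n - 1)`.
-/

open Finset Function

section Configurations

variable {V Λ : Type*} [Fintype V] [DecidableEq V] [Fintype Λ] [DecidableEq Λ]

def agreeOutside (S : Finset V) (x : V → Λ) : Finset (V → Λ) :=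
  univ.filter fun y => ∀ j ∉ S, y j = x j

theorem mem_agreeOutside {S : Finset V} {x y : V → Λ} :
    y ∈ agreeOutside S x ↔ ∀ j ∉ S, y j = x j := by
  simp [agreeOutside]

theorem sum_agreeOutside_insert {M : Type*} [AddCommMonoid M] (x : V → Λ) {S : Finset V} {v : V}
    (hv : v ∉ S) (f : (V → Λ) → M) :
    ∑ y ∈ agreeOutside (insert v S) x, f y =
      ∑ y ∈ agreeOutside S x, ∑ a, f (update y v a) := by
  rw [← sum_product' (f := fun y a => f (update y v a))]
  refine sum_nbij' (fun y => (update y v (x v), y v)) (fun z => update z.1 v z.2) ?_ ?_ ?_ ?_ ?_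
  · intro y hy
    simp only [mem_product, mem_agreeOutside, mem_univ, and_true] at hy ⊢
    intro j hj
    rcases eq_or_ne j v with rfl | hjv
    · simp
    · simpa [hjv] using hy j (by simp [hjv, hj])
  · rintro ⟨y, a⟩ hy
    simp only [mem_product, mem_agreeOutside, mem_univ, and_true] at hy ⊢
    intro j hj
    rw [mem_insert, not_or] at hj
    simpa [hj.1] using hy j hj.2
  · intro y _
    simp
  · rintro ⟨y, a⟩ hy
    simp only [mem_product, mem_agreeOutside, mem_univ, and_true] at hy
    simp [hy v hv]
  · intro y _
    simp

theorem agreeOutside_empty (x : V → Λ) : agreeOutside ∅ x = {x} := by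
  ext y
  simp [mem_agreeOutside, funext_iff]

theorem sum_agreeOutside_prod_le_pow (K : Λ → Λ → ℝ) (hK : ∀ a b, 0 ≤ K a b) {G : ℝ}
    (hG : ∀ a, ∑ b, K a b ≤ G) (p : V → V) (ρ : V → ℕ) (S : Finset V)
    (hS : ∀ i ∈ S, ρ (p i) < ρ i) (x : V → Λ) :
    ∑ y ∈ agreeOutside S x, ∏ i ∈ S, K (y (p i)) (y i) ≤ G ^ S.card := by
  induction S using Finset.induction_on_max_value ρ generalizing x with
  | empty => simp [agreeOutside_empty]
  | insert v S hv hmax ih =>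
    have hpv : ∀ i ∈ insert v S, p i ≠ v := by
      intro i hi hpi
      have hlt := hS i hi
      have hle : ρ i ≤ ρ v := (mem_insert.1 hi).elim (fun h => h ▸ le_rfl) (hmax i)
      rw [hpi] at hlt
      omega
    have hG0 : 0 ≤ G := (sum_nonneg fun b _ => hK (x v) b).trans (hG _)
    have hfactor : ∀ y a, ∏ i ∈ insert v S, K (update y v a (p i)) (update y v a i) =
        K (y (p v)) a * ∏ i ∈ S, K (y (p i)) (y i) := fun y a => by
      rw [prod_insert hv, update_self, update_of_ne (hpv v (mem_insert_self v S))]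
      congr 1
      refine prod_congr rfl fun i hi => ?_
      rw [update_of_ne (hpv i (mem_insert_of_mem hi)), update_of_ne (ne_of_mem_of_not_mem hi hv)]
    calc ∑ y ∈ agreeOutside (insert v S) x, ∏ i ∈ insert v S, K (y (p i)) (y i)
        = ∑ y ∈ agreeOutside S x, (∑ a, K (y (p v)) a) * ∏ i ∈ S, K (y (p i)) (y i) := by
          simp_rw [sum_agreeOutside_insert x hv, hfactor, sum_mul]
      _ ≤ ∑ y ∈ agreeOutside S x, G * ∏ i ∈ S, K (y (p i)) (y i) := by
          gcongr with y
          · exact prod_nonneg fun i _ => hK _ _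
          · exact hG _
      _ = G * ∑ y ∈ agreeOutside S x, ∏ i ∈ S, K (y (p i)) (y i) := (mul_sum ..).symm
      _ ≤ G * G ^ S.card := by
          gcongr
          exact ih (fun i hi => hS i (mem_insert_of_mem hi)) x
      _ = G ^ (insert v S).card := by rw [card_insert_of_notMem hv, pow_succ']

end Configurations

namespace SimpleGraph

variable {V : Type*} {T : SimpleGraph V}

theorem Connected.exists_adj_dist_lt (hT : T.Connected) {r i : V} (hi : i ≠ r) :
    ∃ w, T.Adj w i ∧ T.dist w r < T.dist i r := by
  obtain ⟨q, hq⟩ := (hT i r).exists_walk_length_eq_dist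
  cases q with
  | nil => exact absurd rfl hi
  | cons h q' =>
    refine ⟨_, h.symm, ?_⟩
    have := dist_le q'
    rw [Walk.length_cons] at hq
    omega

theorem IsTree.prod_edgeFinset_eq_prod_parent [Fintype V] [DecidableEq V] [Fintype T.edgeSet]
    {M : Type*} [CommMonoid M] (hT : T.IsTree) {r : V} {p : V → V} {ρ : V → ℕ}
    (hadj : ∀ i ≠ r, T.Adj (p i) i) (hρ : ∀ i ≠ r, ρ (p i) < ρ i) (f : Sym2 V → M) :
    ∏ e ∈ T.edgeFinset, f e = ∏ i ∈ univ.erase r, f s(p i, i) := by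
  have hinj : Set.InjOn (fun i => s(p i, i)) (univ.erase r) := by
    intro i hi j hj hij
    rcases Sym2.eq_iff.1 hij with ⟨-, h⟩ | ⟨hpi, hpj⟩
    · exact h
    · have hi' := hρ i (ne_of_mem_erase hi)
      have hj' := hρ j (ne_of_mem_erase hj)
      rw [hpi] at hi'
      rw [← hpj] at hj'
      omega
  have himage : (univ.erase r).image (fun i => s(p i, i)) = T.edgeFinset := by
    refine eq_of_subset_of_card_le (fun e he => ?_) ?_
    · obtain ⟨i, hi, rfl⟩ := mem_image.1 he
      exact mem_edgeFinset.2 (hadj i (ne_of_mem_erase hi))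
    · have := hT.card_edgeFinset
      rw [card_image_of_injOn hinj, card_erase_of_mem (mem_univ r), card_univ]
      omega
  rw [← himage, prod_image hinj]

end SimpleGraph

open scoped Classical in
/-- **Tree-graph summation bound.** For a nonempty finite set `Λ`, a symmetric nonnegative
kernel `g`, and a tree `T` on `{1,…,n}` (here `Fin n`, with vertex `1` corresponding to `0`),
the sum over the positions of all vertices other than the fixed root `x₁` of the product of the
kernel over the edges of `T` is at most `G^(n-1)`, where `G` is the maximal row sum of `g`. -/
theorem tree_graph_sum_bound {Λ : Type*} [Fintype Λ] [Nonempty Λ]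
    (n : ℕ) (hn : 2 ≤ n) (g : Λ × Λ → ℝ)
    (hsym : ∀ x y, g (x, y) = g (y, x)) (hpos : ∀ x y, 0 ≤ g (x, y))
    (T : SimpleGraph (Fin n)) (hT : T.IsTree) (x₁ : Λ) :
    ∑ x ∈ Finset.univ.filter (fun x : Fin n → Λ => x ⟨0, by omega⟩ = x₁),
      ∏ e ∈ T.edgeFinset,
        Sym2.lift ⟨fun i j => g (x i, x j), fun i j => by simp [hsym]⟩ e
      ≤ (Finset.univ.sup' Finset.univ_nonempty fun x : Λ => ∑ y : Λ, g (x, y)) ^ (n - 1) := by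
  set r : Fin n := ⟨0, by omega⟩
  choose! p hpadj hpdist using fun i (hi : i ≠ r) => hT.connected.exists_adj_dist_lt hi
  have hroot : univ.filter (fun x : Fin n → Λ => x r = x₁) =
      agreeOutside (univ.erase r) (fun _ => x₁) := by
    ext y
    simp [mem_agreeOutside]
  calc _ = ∑ x ∈ agreeOutside (univ.erase r) (fun _ => x₁),
        ∏ i ∈ univ.erase r, g (x (p i), x i) := by
        rw [hroot]
        refine sum_congr rfl fun x _ => ?_
        rw [hT.prod_edgeFinset_eq_prod_parent (ρ := (T.dist · r)) hpadj hpdist]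
        rfl
    _ ≤ (univ.sup' univ_nonempty fun x : Λ => ∑ y : Λ, g (x, y)) ^ (univ.erase r).card :=
        sum_agreeOutside_prod_le_pow (fun a b => g (a, b)) hpos
          (fun a => le_sup' (fun x => ∑ y, g (x, y)) (mem_univ a))
          p (T.dist · r) _ (fun i hi => hpdist i (ne_of_mem_erase hi)) _
    _ = _ := by simp
end

section
/- Let n ≥ 1 and let g be a real symmetric positive semidefinite n×n matrix. For each nonempty subset Y ⊆ {1,...,n} set V(Y) = Σ_{j∈Y} Σ_{j'∈Y} g_{jj'}, and define the Ursell functions φ(Y) for nonempty Y ⊆ {1,...,n} recursively by φ({j}) = e^{-V({j})} and, for |Y| ≥ 2, by the requirement that e^{-V(Y)} = Σ_π ∏_{B∈π} φ(B), where the sum runs over all partitions π of Y into nonempty blocks. Then |φ({1,...,n})| ≤ Σ_T ∏_{{j,j'}∈E(T)} 2|g_{jj'}|, where the sum runs over all trees T on the vertex set {1,...,n} and the product runs over the edges of T. -/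
/-- `P` is a partition of the finite set `Y` into nonempty blocks. -/
def IsPartitionOf {n : ℕ} (P : Finset (Finset (Fin n))) (Y : Finset (Fin n)) : Prop :=
  (∀ B ∈ P, B.Nonempty) ∧
  ((P : Set (Finset (Fin n))).PairwiseDisjoint id) ∧
  P.sup id = Y

/-!
Write `v e = g j j' + g j' j` for a pair `e = {j, j'}` and `f e = exp (-v e) - 1` for its Mayer
function. Since `exp (-V Y) = ∏_{i ∈ Y} exp (-g i i) * ∏_{e ⊆ Y} (1 + f e)`, expanding the product
over graphs on `Y` and grouping by connected components shows that
`ψ Y = ∏_{i ∈ Y} exp (-g i i) * ∑_{G connected on Y} ∏_{e ∈ G} f e` satisfies the recursion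
defining the Ursell functions, so `φ = ψ`.

Break the ties of `v` to get distinct edge weights. Every connected graph has a unique minimum
spanning tree `T`, and the graphs with minimum spanning tree `T` are `T` together with any set of
admissible edges (those heavier than every edge of the `T`-path joining their endpoints), so
`∑_G ∏ f e = ∑_T ∏_{e ∈ T} f e * exp (-∑_{e admissible} v e)`. Finally
`|f e| ≤ |v e| exp (max (-v e) 0)`, and positive semidefiniteness on the components `C` of the
negative edges of `T` gives
`0 ≤ ∑_C V C ≤ ∑_i g i i + ∑_{e ∈ T, v e < 0} v e + ∑_{e admissible} v e`: a non-admissible pair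
inside a component is lighter than some negative tree edge, and an admissible pair joining two
components is heavier than some nonnegative one. Hence each tree contributes at most
`∏_{e ∈ T} |v e| = ∏_{e ∈ T} 2 |g e|`.
-/

open Finset SimpleGraph Function
open scoped Classical symmDiff

noncomputable section

namespace IsPartitionOf

variable {n : ℕ} {P : Finset (Finset (Fin n))} {Y S B B' : Finset (Fin n)} {j : Fin n}

lemma subset_of_mem (hP : IsPartitionOf P Y) (hB : B ∈ P) : B ⊆ Y :=
  hP.2.2 ▸ le_sup (f := id) hB

lemma exists_mem (hP : IsPartitionOf P Y) (hj : j ∈ Y) : ∃ B ∈ P, j ∈ B := by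
  simpa using mem_sup.1 (hP.2.2 ▸ hj)

lemma eq_of_mem_of_mem (hP : IsPartitionOf P Y) (hB : B ∈ P) (hB' : B' ∈ P) (hj : j ∈ B)
    (hj' : j ∈ B') : B = B' := by
  by_contra hne
  exact Finset.disjoint_left.1 (hP.2.1 (mem_coe.2 hB) (mem_coe.2 hB') hne) hj hj'

lemma eq_singleton (hP : IsPartitionOf P Y) (hY : Y ∈ P) : P = {Y} := by
  refine eq_singleton_iff_unique_mem.2 ⟨hY, fun B hB ↦ ?_⟩
  obtain ⟨x, hx⟩ := hP.1 B hB
  exact hP.eq_of_mem_of_mem hB hY hx (hP.subset_of_mem hB hx)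

lemma ssubset_of_mem (hP : IsPartitionOf P Y) (hPY : P ≠ {Y}) (hB : B ∈ P) : B ⊂ Y :=
  ssubset_of_subset_of_ne (hP.subset_of_mem hB) fun h ↦ hPY (hP.eq_singleton (h ▸ hB))

lemma prod_prod {M : Type*} [CommMonoid M] (hP : IsPartitionOf P Y) (f : Fin n → M) :
    ∏ B ∈ P, ∏ i ∈ B, f i = ∏ i ∈ Y, f i := by
  conv_rhs => rw [← hP.2.2, sup_eq_biUnion, prod_biUnion hP.2.1]
  rfl

lemma erase (hP : IsPartitionOf P Y) (hS : S ∈ P) : IsPartitionOf (P.erase S) (Y \ S) := by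
  refine ⟨fun B hB ↦ hP.1 B (mem_of_mem_erase hB),
    hP.2.1.subset (by simp), le_antisymm ?_ fun y hy ↦ ?_⟩
  · refine Finset.sup_le fun B hB ↦ subset_sdiff.2 ⟨hP.subset_of_mem (mem_of_mem_erase hB), ?_⟩
    exact hP.2.1 (mem_coe.2 (mem_of_mem_erase hB)) (mem_coe.2 hS) (ne_of_mem_erase hB)
  · obtain ⟨hyY, hyS⟩ := mem_sdiff.1 hy
    obtain ⟨B, hB, hyB⟩ := hP.exists_mem hyY
    exact mem_sup.2 ⟨B, mem_erase.2 ⟨fun h ↦ hyS (h ▸ hyB), hB⟩, hyB⟩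

lemma insert (hP : IsPartitionOf P (Y \ S)) (hSY : S ⊆ Y) (hS : S.Nonempty) :
    IsPartitionOf (insert S P) Y := by
  refine ⟨fun B hB ↦ ?_, ?_, ?_⟩
  · rcases mem_insert.1 hB with rfl | hB
    exacts [hS, hP.1 B hB]
  · rw [coe_insert]
    exact hP.2.1.insert fun B hB _ ↦ disjoint_sdiff.mono_right (hP.subset_of_mem hB)
  · rw [sup_insert, hP.2.2, id, sup_eq_union, union_sdiff_of_subset hSY]

end IsPartitionOf

lemma isPartitionOf_singleton {n : ℕ} {Y : Finset (Fin n)} (hY : Y.Nonempty) :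
    IsPartitionOf {Y} Y :=
  ⟨by simpa using hY, by simp, sup_singleton⟩

lemma Real.abs_exp_sub_one_le_mul_exp_max (x : ℝ) :
    |Real.exp x - 1| ≤ |x| * Real.exp (max x 0) := by
  rcases le_total x 0 with hx | hx
  · rw [max_eq_right hx, exp_zero, mul_one, abs_of_nonpos (by linarith [exp_le_one_iff.2 hx]),
      abs_of_nonpos hx]
    linarith [add_one_le_exp x]
  · rw [max_eq_left hx, abs_of_nonneg (by linarith [one_le_exp hx]), abs_of_nonneg hx]
    have h := mul_le_mul_of_nonneg_right (add_one_le_exp (-x)) (exp_pos x).le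
    rw [← exp_add, neg_add_cancel, exp_zero] at h
    linarith

namespace Matrix.PosSemidef

variable {V : Type*} {g : Matrix V V ℝ}

lemma apply_comm (hg : g.PosSemidef) (i j : V) : g i j = g j i :=
  (isHermitian_iff_isSymm.1 hg.1).apply j i

variable [Fintype V]

lemma sum_sum_nonneg (hg : g.PosSemidef) (C : Finset V) : 0 ≤ ∑ i ∈ C, ∑ j ∈ C, g i j := by
  classical
  have h := hg.dotProduct_mulVec_nonneg fun i ↦ if i ∈ C then 1 else 0
  simpa [dotProduct, mulVec, sum_ite_mem, ite_mul] using h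

lemma sum_sum_ite_eq_nonneg (hg : g.PosSemidef) {β : Type*} [DecidableEq β] (c : V → β) :
    0 ≤ ∑ x, ∑ y, if c x = c y then g x y else 0 := by
  have hmaps : ∀ x ∈ (univ : Finset V), c x ∈ univ.image c :=
    fun x _ ↦ mem_image_of_mem c (mem_univ x)
  rw [← sum_fiberwise_of_maps_to hmaps]
  refine sum_nonneg fun b _ ↦ ?_
  have : ∀ x ∈ ({x | c x = b} : Finset V), (∑ y, if c x = c y then g x y else 0)
      = ∑ y ∈ {y | c y = b}, g x y := by
    intro x hx
    rw [sum_filter, (mem_filter.1 hx).2]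
    simp_rw [eq_comm]
  rw [sum_congr rfl this]
  exact hg.sum_sum_nonneg _

end Matrix.PosSemidef

namespace TreeGraphBound

section Pairs

variable {V : Type*}

def pairCoupling (g : Matrix V V ℝ) : Sym2 V → ℝ :=
  Sym2.lift ⟨fun x y ↦ g x y + g y x, fun _ _ ↦ add_comm _ _⟩

@[simp] lemma pairCoupling_mk (g : Matrix V V ℝ) (x y : V) :
    pairCoupling g s(x, y) = g x y + g y x := rfl

lemma edgeSet_fromEdgeSet_of_not_isDiag {E : Finset (Sym2 V)} (hE : ∀ e ∈ E, ¬ e.IsDiag) :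
    (fromEdgeSet (E : Set (Sym2 V))).edgeSet = E := by
  rw [edgeSet_fromEdgeSet]
  ext e
  simp only [Set.mem_sdiff, mem_coe, Sym2.mem_diagSet, and_iff_left_iff_imp]
  exact hE e

variable [DecidableEq V]

def offDiagPairs (Y : Finset V) : Finset (Sym2 V) := {e ∈ Y.sym2 | ¬ e.IsDiag}

@[simp] lemma mk_mem_offDiagPairs {Y : Finset V} {x y : V} :
    s(x, y) ∈ offDiagPairs Y ↔ x ≠ y ∧ x ∈ Y ∧ y ∈ Y := by
  simp [offDiagPairs, and_comm]

lemma offDiagPairs_mono {Y Z : Finset V} (h : Y ⊆ Z) : offDiagPairs Y ⊆ offDiagPairs Z :=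
  filter_subset_filter _ (sym2_mono h)

lemma disjoint_offDiagPairs {Y Z : Finset V} (h : Disjoint Y Z) :
    Disjoint (offDiagPairs Y) (offDiagPairs Z) := by
  refine Finset.disjoint_left.2 ?_
  rintro ⟨x, y⟩ hY hZ
  exact Finset.disjoint_left.1 h (mk_mem_offDiagPairs.1 hY).2.1 (mk_mem_offDiagPairs.1 hZ).2.1

variable [Fintype V] (g : Matrix V V ℝ)

lemma sum_sum_ite_mk_eq {e : Sym2 V} (he : ¬ e.IsDiag) :
    ∑ x, ∑ y, (if s(x, y) = e then g x y else 0) = pairCoupling g e := by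
  induction e with
  | h a b =>
    have hab : a ≠ b := by simpa using he
    simp only [Sym2.eq_iff]
    have : ∀ x y : V, (if x = a ∧ y = b ∨ x = b ∧ y = a then g x y else 0)
        = (if x = a ∧ y = b then g x y else 0) + (if x = b ∧ y = a then g x y else 0) := by
      intro x y
      by_cases h1 : x = a ∧ y = b
      · obtain ⟨rfl, rfl⟩ := h1
        simp [hab]
      · simp [h1]
    simp [this, sum_add_distrib, ite_and]

lemma sum_pairCoupling_eq_sum_sum {s : Finset (Sym2 V)} (hs : ∀ e ∈ s, ¬ e.IsDiag) :
    ∑ e ∈ s, pairCoupling g e = ∑ x, ∑ y, if s(x, y) ∈ s then g x y else 0 := by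
  have : ∀ x y, (if s(x, y) ∈ s then g x y else 0) = ∑ e ∈ s, if s(x, y) = e then g x y else 0 :=
    fun x y ↦ (sum_ite_eq s s(x, y) fun _ ↦ g x y).symm
  simp only [this, ← sum_congr rfl fun e he ↦ sum_sum_ite_mk_eq g (hs e he)]
  rw [sum_comm]
  exact sum_congr rfl fun x _ ↦ sum_comm

lemma sum_sum_eq_sum_diag_add_sum_pairCoupling (Y : Finset V) :
    ∑ i ∈ Y, ∑ j ∈ Y, g i j = ∑ i ∈ Y, g i i + ∑ e ∈ offDiagPairs Y, pairCoupling g e := by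
  have split : ∀ x y, (if x ∈ Y ∧ y ∈ Y then g x y else 0) =
      (if x = y ∧ x ∈ Y then g x y else 0) + if s(x, y) ∈ offDiagPairs Y then g x y else 0 := by
    intro x y
    by_cases hxy : x = y
    · subst hxy; simp
    · simp [hxy]
  have hnd : ∀ e ∈ offDiagPairs Y, ¬ e.IsDiag := fun e he ↦ (mem_filter.1 he).2
  rw [sum_pairCoupling_eq_sum_sum g hnd]
  calc ∑ i ∈ Y, ∑ j ∈ Y, g i j = ∑ x, ∑ y, if x ∈ Y ∧ y ∈ Y then g x y else 0 := by
        simp [ite_and, sum_ite_mem]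
    _ = _ := by
        simp only [split, sum_add_distrib, ite_and, sum_ite_eq, sum_ite_mem, univ_inter]

end Pairs

section ConnectedSum

variable {V : Type*} [DecidableEq V]

variable {R : Type*} [CommSemiring R] (z : Sym2 V → R)

def connectingEdgeSets (Y : Finset V) : Finset (Finset (Sym2 V)) :=
  {E ∈ (offDiagPairs Y).powerset |
    ∀ x ∈ Y, ∀ y ∈ Y, (fromEdgeSet (E : Set (Sym2 V))).Reachable x y}

lemma mem_connectingEdgeSets {Y : Finset V} {E : Finset (Sym2 V)} :
    E ∈ connectingEdgeSets Y ↔ E ⊆ offDiagPairs Y ∧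
      ∀ x ∈ Y, ∀ y ∈ Y, (fromEdgeSet (E : Set (Sym2 V))).Reachable x y := by
  rw [connectingEdgeSets, mem_filter, mem_powerset]

def connectedSum (Y : Finset V) : R := ∑ E ∈ connectingEdgeSets Y, ∏ e ∈ E, z e

def componentIn (E : Finset (Sym2 V)) (j : V) (Y : Finset V) : Finset V :=
  {x ∈ Y | (fromEdgeSet (E : Set (Sym2 V))).Reachable j x}

variable {E : Finset (Sym2 V)} {Y S : Finset V} {j : V}

lemma mem_offDiagPairs_componentIn_or_sdiff (hE : E ⊆ offDiagPairs Y) {e : Sym2 V}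
    (he : e ∈ E) :
    e ∈ offDiagPairs (componentIn E j Y) ∨ e ∈ offDiagPairs (Y \ componentIn E j Y) := by
  induction e with
  | h x y =>
    obtain ⟨hxy, hx, hy⟩ := mk_mem_offDiagPairs.1 (hE he)
    have hadj : (fromEdgeSet (E : Set (Sym2 V))).Reachable x y :=
      ((fromEdgeSet_adj _).2 ⟨he, hxy⟩).reachable
    by_cases hjx : (fromEdgeSet (E : Set (Sym2 V))).Reachable j x
    · left
      simp [componentIn, hxy, hx, hy, hjx, hjx.trans hadj]
    · right
      have hjy : ¬ (fromEdgeSet (E : Set (Sym2 V))).Reachable j y :=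
        fun h ↦ hjx (h.trans hadj.symm)
      simp [componentIn, hxy, hx, hy, hjx, hjy]

lemma inter_union_inter_componentIn (hE : E ⊆ offDiagPairs Y) :
    E ∩ offDiagPairs (componentIn E j Y) ∪ E ∩ offDiagPairs (Y \ componentIn E j Y) = E := by
  rw [← inter_union_distrib_left, inter_eq_left]
  exact fun e he ↦ mem_union.2 (mem_offDiagPairs_componentIn_or_sdiff hE he)

lemma reachable_inter_offDiagPairs_componentIn (hE : E ⊆ offDiagPairs Y) {x : V}
    (hx : (fromEdgeSet (E : Set (Sym2 V))).Reachable j x) :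
    (fromEdgeSet ((E ∩ offDiagPairs (componentIn E j Y) : Finset (Sym2 V)) :
      Set (Sym2 V))).Reachable j x := by
  rw [reachable_iff_reflTransGen] at hx ⊢
  induction hx with
  | refl => rfl
  | @tail b c hjb hbc ih =>
    obtain ⟨hbcE, hbc⟩ := (fromEdgeSet_adj _).1 hbc
    obtain ⟨-, hb, hc⟩ := mk_mem_offDiagPairs.1 (hE hbcE)
    have hjb' := (reachable_iff_reflTransGen _ _).2 hjb
    have hjc := hjb'.trans ((fromEdgeSet_adj _).2 ⟨hbcE, hbc⟩).reachable
    refine ih.tail ((fromEdgeSet_adj _).2 ⟨?_, hbc⟩)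
    simp [componentIn, hbcE, hbc, hb, hc, hjb', hjc]

lemma componentIn_union (hSY : S ⊆ Y) (hjS : j ∈ S) {E₁ E₂ : Finset (Sym2 V)}
    (hE₁ : E₁ ∈ connectingEdgeSets S) (hE₂ : E₂ ⊆ offDiagPairs (Y \ S)) :
    componentIn (E₁ ∪ E₂) j Y = S := by
  obtain ⟨hE₁S, hE₁c⟩ := mem_connectingEdgeSets.1 hE₁
  refine Subset.antisymm (fun x hx ↦ ?_) fun x hx ↦ ?_
  · replace hx := (reachable_iff_reflTransGen _ _).1 (mem_filter.1 hx).2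
    induction hx with
    | refl => exact hjS
    | @tail b c _ hbc ih =>
      obtain ⟨hbcE, -⟩ := (fromEdgeSet_adj _).1 hbc
      rcases mem_union.1 (mem_coe.1 hbcE) with h | h
      · exact (mk_mem_offDiagPairs.1 (hE₁S h)).2.2
      · exact absurd ih (mem_sdiff.1 (mk_mem_offDiagPairs.1 (hE₂ h)).2.1).2
  · refine mem_filter.2 ⟨hSY hx, (hE₁c j hjS x hx).mono (fromEdgeSet_mono ?_)⟩
    exact_mod_cast subset_union_left

lemma sum_powerset_filter_componentIn_eq (hSY : S ⊆ Y) (hjS : j ∈ S) :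
    ∑ E ∈ (offDiagPairs Y).powerset with componentIn E j Y = S, ∏ e ∈ E, z e
      = connectedSum z S * ∑ E ∈ (offDiagPairs (Y \ S)).powerset, ∏ e ∈ E, z e := by
  have hdisj : Disjoint (offDiagPairs S) (offDiagPairs (Y \ S)) :=
    disjoint_offDiagPairs disjoint_sdiff
  rw [connectedSum, sum_mul_sum, ← sum_product']
  refine sum_nbij' (fun E ↦ (E ∩ offDiagPairs S, E ∩ offDiagPairs (Y \ S))) (fun p ↦ p.1 ∪ p.2)
    ?_ ?_ ?_ ?_ ?_
  · intro E hE
    obtain ⟨hEY, rfl⟩ := mem_filter.1 hE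
    refine mem_product.2 ⟨mem_connectingEdgeSets.2 ⟨inter_subset_right, ?_⟩,
      mem_powerset.2 inter_subset_right⟩
    intro x hx y hy
    have hEY := mem_powerset.1 hEY
    exact (reachable_inter_offDiagPairs_componentIn hEY (mem_filter.1 hx).2).symm.trans
      (reachable_inter_offDiagPairs_componentIn hEY (mem_filter.1 hy).2)
  · rintro ⟨E₁, E₂⟩ hE
    obtain ⟨hE₁, hE₂⟩ := mem_product.1 hE
    refine mem_filter.2 ⟨mem_powerset.2 (union_subset ?_ ?_),
      componentIn_union hSY hjS hE₁ (mem_powerset.1 hE₂)⟩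
    · exact (mem_connectingEdgeSets.1 hE₁).1.trans (offDiagPairs_mono hSY)
    · exact (mem_powerset.1 hE₂).trans (offDiagPairs_mono sdiff_subset)
  · intro E hE
    obtain ⟨hEY, rfl⟩ := mem_filter.1 hE
    exact inter_union_inter_componentIn (mem_powerset.1 hEY)
  · rintro ⟨E₁, E₂⟩ hE
    obtain ⟨hE₁, hE₂⟩ := mem_product.1 hE
    have h₁ : E₁ ⊆ offDiagPairs S := (mem_connectingEdgeSets.1 hE₁).1
    have h₂ : E₂ ⊆ offDiagPairs (Y \ S) := mem_powerset.1 hE₂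
    simp only [union_inter_distrib_right, inter_eq_left.2 h₁, inter_eq_left.2 h₂,
      disjoint_iff_inter_eq_empty.1 (hdisj.mono_left h₁),
      disjoint_iff_inter_eq_empty.1 (hdisj.symm.mono_left h₂), union_empty, empty_union]
  · intro E hE
    obtain ⟨hEY, rfl⟩ := mem_filter.1 hE
    rw [← prod_union ((hdisj.mono inter_subset_right inter_subset_right)),
      inter_union_inter_componentIn (mem_powerset.1 hEY)]

lemma sum_powerset_offDiagPairs_eq_sum_connectedSum (hj : j ∈ Y) :
    ∑ E ∈ (offDiagPairs Y).powerset, ∏ e ∈ E, z e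
      = ∑ S ∈ Y.powerset with j ∈ S,
          connectedSum z S * ∑ E ∈ (offDiagPairs (Y \ S)).powerset, ∏ e ∈ E, z e := by
  have hmaps : ∀ E ∈ (offDiagPairs Y).powerset, componentIn E j Y ∈ {S ∈ Y.powerset | j ∈ S} :=
    fun E _ ↦ mem_filter.2 ⟨mem_powerset.2 (filter_subset _ _), mem_filter.2 ⟨hj, .rfl⟩⟩
  rw [← sum_fiberwise_of_maps_to hmaps]
  refine sum_congr rfl fun S hS ↦ ?_
  obtain ⟨hSY, hjS⟩ := mem_filter.1 hS
  exact sum_powerset_filter_componentIn_eq z (mem_powerset.1 hSY) hjS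

variable [Fintype V]

lemma connectedSum_univ [Nonempty V] {R : Type*} [CommSemiring R] (z : Sym2 V → R) :
    connectedSum z univ = ∑ G ∈ {G : SimpleGraph V | G.Connected}, ∏ e ∈ G.edgeFinset, z e := by
  have hE : ∀ E ∈ connectingEdgeSets (univ : Finset V),
      (fromEdgeSet (E : Set (Sym2 V))).edgeSet = E := fun E hE ↦
    edgeSet_fromEdgeSet_of_not_isDiag fun e he ↦
      (mem_filter.1 ((mem_connectingEdgeSets.1 hE).1 he)).2
  refine sum_nbij' (fun E ↦ fromEdgeSet (E : Set (Sym2 V))) (fun G ↦ G.edgeFinset)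
    (fun E hE ↦ ?_) (fun G hG ↦ ?_) (fun E hE' ↦ coe_injective (by rw [coe_edgeFinset, hE E hE']))
    (fun G _ ↦ ?_)
    (fun E hE' ↦ prod_congr (coe_injective (by rw [coe_edgeFinset, hE E hE'])).symm fun _ _ ↦ rfl)
  · refine mem_filter.2 ⟨mem_univ _, (connected_iff _).2 ⟨fun x y ↦ ?_, ‹_›⟩⟩
    exact (mem_connectingEdgeSets.1 hE).2 x (mem_univ x) y (mem_univ y)
  · refine mem_connectingEdgeSets.2 ⟨fun e he ↦ ?_, fun x _ y _ ↦ ?_⟩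
    · exact mem_filter.2 ⟨mem_sym2_iff.2 fun _ _ ↦ mem_univ _,
        not_isDiag_of_mem_edgeSet G (mem_edgeFinset.1 he)⟩
    · rw [coe_edgeFinset, fromEdgeSet_edgeSet]
      exact (mem_filter.1 hG).2.preconnected x y
  · simp only [coe_edgeFinset, fromEdgeSet_edgeSet]

end ConnectedSum

section Partitions

variable {n : ℕ} {P : Finset (Finset (Fin n))} {Y S : Finset (Fin n)} {j : Fin n}

def partitions (Y : Finset (Fin n)) : Finset (Finset (Finset (Fin n))) := {P | IsPartitionOf P Y}

@[simp] lemma mem_partitions : P ∈ partitions Y ↔ IsPartitionOf P Y := by simp [partitions]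

lemma partitions_empty : partitions (∅ : Finset (Fin n)) = {∅} := by
  refine eq_singleton_iff_unique_mem.2 ⟨mem_partitions.2 ⟨by simp, by simp, rfl⟩, fun P hP ↦ ?_⟩
  have hP := mem_partitions.1 hP
  refine eq_empty_of_forall_notMem fun B hB ↦ ?_
  obtain ⟨x, hx⟩ := hP.1 B hB
  simpa using hP.subset_of_mem hB hx

variable {R : Type*} [CommSemiring R] (F : Finset (Fin n) → R)

def partitionSum (Y : Finset (Fin n)) : R := ∑ P ∈ partitions Y, ∏ B ∈ P, F B

@[simp] lemma partitionSum_empty : partitionSum F ∅ = 1 := by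
  simp [partitionSum, partitions_empty]

lemma sum_partitions_filter_mem (hSY : S ⊆ Y) (hS : S.Nonempty) :
    ∑ P ∈ partitions Y with S ∈ P, ∏ B ∈ P, F B = F S * partitionSum F (Y \ S) := by
  rw [partitionSum, mul_sum]
  refine sum_nbij' (fun P ↦ P.erase S) (insert S) (fun P hP ↦ ?_) (fun P hP ↦ ?_)
    (fun P hP ↦ ?_) (fun P hP ↦ ?_) (fun P hP ↦ ?_)
  · obtain ⟨hP, hSP⟩ := mem_filter.1 hP
    exact mem_partitions.2 ((mem_partitions.1 hP).erase hSP)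
  · exact mem_filter.2 ⟨mem_partitions.2 ((mem_partitions.1 hP).insert hSY hS), mem_insert_self _ _⟩
  · exact insert_erase (mem_filter.1 hP).2
  · refine erase_insert fun hSP ↦ ?_
    obtain ⟨x, hx⟩ := hS
    exact (mem_sdiff.1 ((mem_partitions.1 hP).subset_of_mem hSP hx)).2 hx
  · exact (mul_prod_erase P F (mem_filter.1 hP).2).symm

lemma partitionSum_eq_sum_block (hj : j ∈ Y) :
    partitionSum F Y = ∑ S ∈ Y.powerset with j ∈ S, F S * partitionSum F (Y \ S) := by
  have hblock : ∀ P ∈ partitions Y, ∑ S ∈ P with j ∈ S, ∏ B ∈ P, F B = ∏ B ∈ P, F B := by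
    intro P hP
    have hP := mem_partitions.1 hP
    obtain ⟨B, hB, hjB⟩ := hP.exists_mem hj
    have : {S ∈ P | j ∈ S} = {B} := eq_singleton_iff_unique_mem.2
      ⟨mem_filter.2 ⟨hB, hjB⟩, fun S hS ↦ hP.eq_of_mem_of_mem (mem_filter.1 hS).1 hB
        (mem_filter.1 hS).2 hjB⟩
    rw [this, sum_singleton]
  rw [partitionSum, ← sum_congr rfl hblock, sum_comm' (t' := {S ∈ Y.powerset | j ∈ S})
    (s' := fun S ↦ {P ∈ partitions Y | S ∈ P})]
  · refine sum_congr rfl fun S hS ↦ ?_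
    obtain ⟨hSY, hjS⟩ := mem_filter.1 hS
    exact sum_partitions_filter_mem F (mem_powerset.1 hSY) ⟨j, hjS⟩
  · intro P S
    simp only [mem_filter, mem_powerset, mem_partitions]
    exact ⟨fun ⟨hP, hSP, hjS⟩ ↦ ⟨⟨hP, hSP⟩, hP.subset_of_mem hSP, hjS⟩,
      fun ⟨⟨hP, hSP⟩, _, hjS⟩ ↦ ⟨hP, hSP, hjS⟩⟩

end Partitions

section ExponentialFormula

variable {n : ℕ} {R : Type*}

lemma sum_powerset_offDiagPairs_eq_partitionSum [CommSemiring R] (z : Sym2 (Fin n) → R)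
    (Y : Finset (Fin n)) :
    ∑ E ∈ (offDiagPairs Y).powerset, ∏ e ∈ E, z e = partitionSum (connectedSum z) Y := by
  induction Y using Finset.strongInduction with
  | H Y ih =>
    rcases Y.eq_empty_or_nonempty with rfl | ⟨j, hj⟩
    · simp [offDiagPairs, partitionSum_empty]
    rw [sum_powerset_offDiagPairs_eq_sum_connectedSum z hj, partitionSum_eq_sum_block _ hj]
    refine sum_congr rfl fun S hS ↦ ?_
    obtain ⟨hSY, hjS⟩ := mem_filter.1 hS
    rw [ih _ (sdiff_ssubset (mem_powerset.1 hSY) ⟨j, hjS⟩)]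

lemma partitionSum_eq_add_sum_erase [CommSemiring R] (F : Finset (Fin n) → R)
    {Y : Finset (Fin n)} (hY : Y.Nonempty) :
    partitionSum F Y = F Y + ∑ P ∈ (partitions Y).erase {Y}, ∏ B ∈ P, F B := by
  rw [partitionSum, ← add_sum_erase _ _ (mem_partitions.2 (isPartitionOf_singleton hY)),
    prod_singleton]

lemma eq_of_partitionSum_eq [CommRing R] {F F' : Finset (Fin n) → R}
    (h₁ : ∀ j, F {j} = F' {j}) (h₂ : ∀ Y, 2 ≤ #Y → partitionSum F Y = partitionSum F' Y)
    (Y : Finset (Fin n)) (hY : Y.Nonempty) : F Y = F' Y := by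
  induction Y using Finset.strongInduction with
  | H Y ih =>
    rcases le_or_gt 2 #Y with hcard | hcard
    · have hrest : ∑ P ∈ (partitions Y).erase {Y}, ∏ B ∈ P, F B
          = ∑ P ∈ (partitions Y).erase {Y}, ∏ B ∈ P, F' B := by
        refine sum_congr rfl fun P hP ↦ prod_congr rfl fun B hB ↦ ?_
        obtain ⟨hPY, hP⟩ := mem_erase.1 hP
        have hP := mem_partitions.1 hP
        exact ih B (hP.ssubset_of_mem hPY hB) (hP.1 B hB)
      have := h₂ Y hcard
      rw [partitionSum_eq_add_sum_erase F hY, partitionSum_eq_add_sum_erase F' hY, hrest] at this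
      exact add_right_cancel this
    · have hY1 : #Y = 1 := by have := hY.card_pos; omega
      obtain ⟨j, rfl⟩ := card_eq_one.1 hY1
      exact h₁ j

end ExponentialFormula

section Ursell

open Real

variable {V : Type*} (g : Matrix V V ℝ)

def mayerFunction (e : Sym2 V) : ℝ := exp (-pairCoupling g e) - 1

variable [DecidableEq V]

def ursellFunction (Y : Finset V) : ℝ :=
  (∏ i ∈ Y, exp (-g i i)) * connectedSum (mayerFunction g) Y

lemma connectedSum_singleton {R : Type*} [CommSemiring R] (z : Sym2 V → R) (j : V) :
    connectedSum z {j} = 1 := by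
  have : connectingEdgeSets {j} = {∅} := by
    simp [connectingEdgeSets, offDiagPairs, Finset.filter_eq_empty_iff]
  simp [connectedSum, this]

lemma ursellFunction_singleton (j : V) : ursellFunction g {j} = exp (-g j j) := by
  simp [ursellFunction, connectedSum_singleton]

lemma exp_neg_sum_sum_eq [Fintype V] (Y : Finset V) :
    exp (-∑ i ∈ Y, ∑ j ∈ Y, g i j)
      = (∏ i ∈ Y, exp (-g i i)) * ∑ E ∈ (offDiagPairs Y).powerset, ∏ e ∈ E, mayerFunction g e := by
  simp only [mayerFunction, ← prod_one_add, add_sub_cancel, ← exp_sum, ← exp_add,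
    sum_sum_eq_sum_diag_add_sum_pairCoupling, neg_add, sum_neg_distrib]

lemma partitionSum_ursellFunction {n : ℕ} (g : Matrix (Fin n) (Fin n) ℝ) (Y : Finset (Fin n)) :
    partitionSum (ursellFunction g) Y = exp (-∑ i ∈ Y, ∑ j ∈ Y, g i j) := by
  have hP : ∀ P ∈ partitions Y, ∏ B ∈ P, ursellFunction g B
      = (∏ i ∈ Y, exp (-g i i)) * ∏ B ∈ P, connectedSum (mayerFunction g) B := by
    intro P hP
    simp only [ursellFunction, prod_mul_distrib, (mem_partitions.1 hP).prod_prod]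
  rw [partitionSum, sum_congr rfl hP, ← mul_sum, exp_neg_sum_sum_eq,
    sum_powerset_offDiagPairs_eq_partitionSum, partitionSum]

theorem eq_ursellFunction_of_partitionSum {n : ℕ} (g : Matrix (Fin n) (Fin n) ℝ)
    {φ : Finset (Fin n) → ℝ} (h₁ : ∀ j, φ {j} = exp (-g j j))
    (h₂ : ∀ Y, 2 ≤ #Y → exp (-∑ i ∈ Y, ∑ j ∈ Y, g i j) = partitionSum φ Y)
    {Y : Finset (Fin n)} (hY : Y.Nonempty) : φ Y = ursellFunction g Y :=
  eq_of_partitionSum_eq (fun j ↦ by rw [h₁, ursellFunction_singleton])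
    (fun Y hY ↦ by rw [← h₂ Y hY, partitionSum_ursellFunction]) Y hY

end Ursell

section SpanningTrees

variable {V : Type*}

/-- For a tree `H` and an edge `f` of `H`, `Separates H f e` says that `f` lies on the path
joining the endpoints of `e`. -/
def Separates (H : SimpleGraph V) (f : Sym2 V) : Sym2 V → Prop :=
  Sym2.lift ⟨fun x y ↦ ¬ (H.deleteEdges {f}).Reachable x y, fun _ _ ↦ by simp [reachable_comm]⟩

variable {H G T : SimpleGraph V} {f : Sym2 V} {x y : V}

lemma separates_iff_forall_walk : Separates H f s(x, y) ↔ ∀ p : H.Walk x y, f ∈ p.edges := by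
  induction f with
  | h a b =>
    simp only [Separates, Sym2.lift_mk, reachable_deleteEdges_iff_exists_walk, not_exists_not]

lemma not_isBridge_of_separates (hTG : T ≤ G) (hT : T.Connected) (hxy : G.Adj x y)
    (hxyT : s(x, y) ∉ T.edgeSet) (hf : Separates T f s(x, y)) : ¬ G.IsBridge f := by
  obtain ⟨p, hp⟩ := hT.exists_isPath y x
  have hcycle : (Walk.cons hxy (p.mapLe hTG)).IsCycle := by
    rw [Walk.cons_isCycle_iff, Walk.isPath_mapLe, Walk.edges_mapLe_eq_edges]
    exact ⟨hp, fun h ↦ hxyT (p.edges_subset_edgeSet h)⟩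
  have hfp : f ∈ p.edges := separates_iff_forall_walk.1 (by rwa [Sym2.eq_swap]) p
  intro hbridge
  refine hbridge.notMem_edges_of_isCycle hcycle ?_
  rw [Walk.edges_cons, Walk.edges_mapLe_eq_edges]
  exact List.mem_cons_of_mem _ hfp

lemma Separates.notMem_of_reachable_deleteEdges {s : Set (Sym2 V)} (hf : Separates H f s(x, y))
    (h : (H.deleteEdges s).Reachable x y) : f ∉ s := by
  obtain ⟨p⟩ := h
  have hfp := separates_iff_forall_walk.1 hf (p.mapLe (deleteEdges_le s))
  rw [Walk.edges_mapLe_eq_edges] at hfp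
  have := p.edges_subset_edgeSet hfp
  rw [edgeSet_deleteEdges] at this
  exact this.2

variable [DecidableEq V]

lemma separates_of_isAcyclic_of_mem_edges (hH : H.IsAcyclic) {p : H.Walk x y} (hp : p.IsPath)
    (hf : f ∈ p.edges) : Separates H f s(x, y) := by
  refine separates_iff_forall_walk.2 fun q ↦ q.edges_toPath_subset_edges ?_
  have := hH.subsingleton_path x y
  rwa [Subsingleton.elim q.toPath ⟨p, hp⟩]

variable {α : Type*} [LinearOrder α] (w : Sym2 V → α)

/-- `T` is the minimum spanning tree of `G` for the edge weights `w`, stated by the cycle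
property: every edge of `G` outside `T` is heavier than each edge on the `T`-path joining its
endpoints. -/
def IsMinSpanningTree (G T : SimpleGraph V) : Prop :=
  T ≤ G ∧ T.IsTree ∧ ∀ e ∈ G.edgeSet \ T.edgeSet, ∀ f ∈ T.edgeSet, Separates T f e → w f < w e

variable {w}

lemma IsMinSpanningTree.of_deleteEdges {e : Sym2 V}
    (hT : IsMinSpanningTree w (G.deleteEdges {e}) T)
    (he : ∀ f ∈ T.edgeSet, Separates T f e → w f < w e) : IsMinSpanningTree w G T := by
  refine ⟨hT.1.trans (deleteEdges_le _), hT.2.1, fun e' he' ↦ ?_⟩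
  by_cases hee' : e' = e
  · exact hee' ▸ he
  · refine hT.2.2 e' ⟨?_, he'.2⟩
    rw [edgeSet_deleteEdges]
    exact ⟨he'.1, hee'⟩

lemma IsMinSpanningTree.exists_lt {T₁ T₂ : SimpleGraph V} (h₁ : IsMinSpanningTree w G T₁)
    (h₂ : IsMinSpanningTree w G T₂) (hf₁ : f ∈ T₁.edgeSet) (hf₂ : f ∉ T₂.edgeSet) :
    ∃ h ∈ T₂.edgeSet \ T₁.edgeSet, w h < w f := by
  obtain ⟨a, b⟩ := f
  obtain ⟨q, hq⟩ := h₂.2.1.connected.exists_isPath a b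
  obtain ⟨h, hqh, hhT₁⟩ : ∃ h ∈ q.edges, h ∉ T₁.edgeSet := by
    by_contra! hq₁
    have hbridge := isAcyclic_iff_forall_adj_isBridge.1 h₁.2.1.isAcyclic hf₁
    rw [isBridge_iff_forall_walk_mem_edges] at hbridge
    have := hbridge (q.transfer T₁ hq₁)
    rw [Walk.edges_transfer] at this
    exact hf₂ (q.edges_subset_edgeSet this)
  have hhT₂ := q.edges_subset_edgeSet hqh
  exact ⟨h, ⟨hhT₂, hhT₁⟩, h₂.2.2 _ ⟨edgeSet_mono h₁.1 hf₁, hf₂⟩ h hhT₂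
    (separates_of_isAcyclic_of_mem_edges h₂.2.1.isAcyclic hq hqh)⟩

variable [Fintype V]

variable (w) in
/-- The edges whose addition to the tree `T` leaves `T` the minimum spanning tree. -/
def admissibleEdges (T : SimpleGraph V) : Finset (Sym2 V) :=
  {e | ¬ e.IsDiag ∧ e ∉ T.edgeSet ∧ ∀ f ∈ T.edgeSet, Separates T f e → w f < w e}

lemma mem_admissibleEdges {e : Sym2 V} : e ∈ admissibleEdges w T ↔
    ¬ e.IsDiag ∧ e ∉ T.edgeSet ∧ ∀ f ∈ T.edgeSet, Separates T f e → w f < w e := by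
  simp [admissibleEdges]

theorem exists_isMinSpanningTree (hw : Injective w) (hG : G.Connected) :
    ∃ T, IsMinSpanningTree w G T := by
  induction hm : #G.edgeFinset using Nat.strong_induction_on generalizing G with
  | _ m ih =>
  by_cases hac : G.IsAcyclic
  · exact ⟨G, le_rfl, ⟨hG, hac⟩, by simp⟩
  -- Delete the heaviest edge that lies on a cycle, and recurse.
  obtain ⟨e₀, he₀, hmax⟩ : ∃ e₀ ∈ {e ∈ G.edgeFinset | ¬ G.IsBridge e},
      ∀ e ∈ {e ∈ G.edgeFinset | ¬ G.IsBridge e}, w e ≤ w e₀ := by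
    refine exists_max_image _ w ?_
    simp only [isAcyclic_iff_forall_isBridge, not_forall] at hac
    obtain ⟨e, he, hb⟩ := hac
    exact ⟨e, mem_filter.2 ⟨mem_edgeFinset.2 he, hb⟩⟩
  obtain ⟨he₀G, he₀b⟩ := mem_filter.1 he₀
  obtain ⟨x, y⟩ := e₀
  have hcard : #(G.deleteEdges {s(x, y)}).edgeFinset < m := by
    rw [← hm]
    refine card_lt_card (edgeFinset_strict_mono ((deleteEdges_le _).lt_of_ne fun h ↦ ?_))
    have := h ▸ mem_edgeFinset.1 he₀G
    simp at this
  obtain ⟨T, hT⟩ := ih _ hcard (hG.connected_delete_edge_of_not_isBridge he₀b) (by convert rfl)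
  refine ⟨T, hT.of_deleteEdges fun f hf hsep ↦ ?_⟩
  have hxyT : s(x, y) ∉ T.edgeSet := fun h ↦ by simpa using hT.1 ((mem_edgeSet T).1 h)
  have hfG : f ∈ G.edgeFinset :=
    mem_edgeFinset.2 (edgeSet_mono (hT.1.trans (deleteEdges_le _)) hf)
  have hf_le := hmax f (mem_filter.2 ⟨hfG, not_isBridge_of_separates
    (hT.1.trans (deleteEdges_le _)) hT.2.1.connected (mem_edgeFinset.1 he₀G) hxyT hsep⟩)
  exact lt_of_le_of_ne hf_le fun h ↦ hxyT (hw h ▸ hf)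

lemma IsMinSpanningTree.unique {T₁ T₂ : SimpleGraph V} (h₁ : IsMinSpanningTree w G T₁)
    (h₂ : IsMinSpanningTree w G T₂) : T₁ = T₂ := by
  by_contra hne
  obtain ⟨f, hf, hmin⟩ := exists_min_image (T₁.edgeFinset ∆ T₂.edgeFinset) w
    (symmDiff_nonempty.2 (edgeFinset_inj.not.2 hne))
  obtain ⟨h, hh, hlt⟩ : ∃ h ∈ T₁.edgeFinset ∆ T₂.edgeFinset, w h < w f := by
    rcases mem_symmDiff.1 hf with ⟨hf₁, hf₂⟩ | ⟨hf₂, hf₁⟩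
    · obtain ⟨h, ⟨hh₂, hh₁⟩, hlt⟩ := h₁.exists_lt h₂ (mem_edgeFinset.1 hf₁)
        (mt mem_edgeFinset.2 hf₂)
      exact ⟨h, mem_symmDiff.2 (Or.inr ⟨mem_edgeFinset.2 hh₂, mt mem_edgeFinset.1 hh₁⟩), hlt⟩
    · obtain ⟨h, ⟨hh₁, hh₂⟩, hlt⟩ := h₂.exists_lt h₁ (mem_edgeFinset.1 hf₂)
        (mt mem_edgeFinset.2 hf₁)
      exact ⟨h, mem_symmDiff.2 (Or.inl ⟨mem_edgeFinset.2 hh₁, mt mem_edgeFinset.1 hh₂⟩), hlt⟩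
  exact (hmin h hh).not_gt hlt

lemma not_isDiag_of_mem_admissibleEdges {e : Sym2 V} (he : e ∈ admissibleEdges w T) :
    ¬ e.IsDiag :=
  (mem_admissibleEdges.1 he).1

lemma disjoint_edgeFinset_admissibleEdges : Disjoint T.edgeFinset (admissibleEdges w T) :=
  disjoint_right.2 fun _ he heT ↦ (mem_admissibleEdges.1 he).2.1 (mem_edgeFinset.1 heT)

lemma edgeSet_sup_fromEdgeSet {M : Finset (Sym2 V)} (hM : M ⊆ admissibleEdges w T) :
    (T ⊔ fromEdgeSet (M : Set (Sym2 V))).edgeSet = T.edgeSet ∪ M := by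
  rw [edgeSet_sup, edgeSet_fromEdgeSet_of_not_isDiag fun e he ↦
    not_isDiag_of_mem_admissibleEdges (hM he)]

lemma isMinSpanningTree_sup_fromEdgeSet (hT : T.IsTree) {M : Finset (Sym2 V)}
    (hM : M ⊆ admissibleEdges w T) :
    IsMinSpanningTree w (T ⊔ fromEdgeSet (M : Set (Sym2 V))) T := by
  refine ⟨le_sup_left, hT, fun e ⟨he, heT⟩ ↦ ?_⟩
  rw [edgeSet_sup_fromEdgeSet hM] at he
  exact (mem_admissibleEdges.1 (hM (he.resolve_left heT))).2.2

lemma eq_of_sup_fromEdgeSet_eq {T₁ T₂ : SimpleGraph V} {M₁ M₂ : Finset (Sym2 V)}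
    (hT₁ : T₁.IsTree) (hT₂ : T₂.IsTree) (hM₁ : M₁ ⊆ admissibleEdges w T₁)
    (hM₂ : M₂ ⊆ admissibleEdges w T₂)
    (h : T₁ ⊔ fromEdgeSet (M₁ : Set (Sym2 V)) = T₂ ⊔ fromEdgeSet (M₂ : Set (Sym2 V))) :
    T₁ = T₂ ∧ M₁ = M₂ := by
  have h₂ := isMinSpanningTree_sup_fromEdgeSet hT₂ hM₂
  rw [← h] at h₂
  obtain rfl := (isMinSpanningTree_sup_fromEdgeSet hT₁ hM₁).unique h₂
  have hM : ∀ M ⊆ admissibleEdges w T₁,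
      (M : Set (Sym2 V)) = (T₁ ⊔ fromEdgeSet (M : Set (Sym2 V))).edgeSet \ T₁.edgeSet :=
    fun M hM ↦ by
      rw [edgeSet_sup_fromEdgeSet hM, Set.union_sdiff_cancel_left]
      exact fun e ⟨heT, heM⟩ ↦ (mem_admissibleEdges.1 (hM heM)).2.1 heT
  exact ⟨rfl, coe_inj.1 (by rw [hM M₁ hM₁, hM M₂ hM₂, h])⟩

lemma IsMinSpanningTree.sdiff_subset_admissibleEdges (hT : IsMinSpanningTree w G T) :
    G.edgeFinset \ T.edgeFinset ⊆ admissibleEdges w T := by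
  intro e he
  obtain ⟨heG, heT⟩ := mem_sdiff.1 he
  exact mem_admissibleEdges.2 ⟨not_isDiag_of_mem_edgeSet G (mem_edgeFinset.1 heG),
    mt mem_edgeFinset.2 heT, hT.2.2 e ⟨mem_edgeFinset.1 heG, mt mem_edgeFinset.2 heT⟩⟩

lemma sup_fromEdgeSet_sdiff (hTG : T ≤ G) :
    T ⊔ fromEdgeSet ((G.edgeFinset \ T.edgeFinset : Finset (Sym2 V)) : Set (Sym2 V)) = G := by
  rw [← edgeSet_inj, edgeSet_sup, edgeSet_fromEdgeSet, coe_sdiff, coe_edgeFinset, coe_edgeFinset]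
  ext e
  have := @edgeSet_mono _ _ _ hTG e
  have := not_isDiag_of_mem_edgeSet G (e := e)
  simp only [Set.mem_union, Set.mem_sdiff, Sym2.mem_diagSet]
  tauto

theorem sum_connected_eq_sum_isTree (hw : Injective w) {R : Type*} [CommSemiring R]
    (z : Sym2 V → R) :
    ∑ G ∈ {G : SimpleGraph V | G.Connected}, ∏ e ∈ G.edgeFinset, z e
      = ∑ T ∈ {T : SimpleGraph V | T.IsTree},
          (∏ e ∈ T.edgeFinset, z e) * ∏ e ∈ admissibleEdges w T, (1 + z e) := by
  have hterm : ∀ T : SimpleGraph V,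
      (∏ e ∈ T.edgeFinset, z e) * ∏ e ∈ admissibleEdges w T, (1 + z e)
        = ∑ M ∈ (admissibleEdges w T).powerset,
          ∏ e ∈ (T ⊔ fromEdgeSet (M : Set (Sym2 V))).edgeFinset, z e := by
    intro T
    rw [prod_one_add, mul_sum]
    refine sum_congr rfl fun M hM ↦ ?_
    have hM := mem_powerset.1 hM
    rw [← prod_union (disjoint_edgeFinset_admissibleEdges.mono_right hM)]
    exact prod_congr (coe_injective (by rw [coe_edgeFinset, edgeSet_sup_fromEdgeSet hM,
      coe_union, coe_edgeFinset])).symm fun _ _ ↦ rfl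
  rw [sum_congr rfl fun T _ ↦ hterm T, sum_sigma']
  symm
  refine sum_bij (fun x _ ↦ x.1 ⊔ fromEdgeSet (x.2 : Set (Sym2 V))) ?_ ?_ ?_
    fun _ _ ↦ by convert rfl
  · rintro ⟨T, M⟩ hx
    obtain ⟨hT, -⟩ := mem_sigma.1 hx
    exact mem_filter.2 ⟨mem_univ _, (mem_filter.1 hT).2.connected.mono le_sup_left⟩
  · rintro ⟨T₁, M₁⟩ hx₁ ⟨T₂, M₂⟩ hx₂ h
    obtain ⟨hT₁, hM₁⟩ := mem_sigma.1 hx₁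
    obtain ⟨hT₂, hM₂⟩ := mem_sigma.1 hx₂
    obtain ⟨rfl, rfl⟩ := eq_of_sup_fromEdgeSet_eq (mem_filter.1 hT₁).2 (mem_filter.1 hT₂).2
      (mem_powerset.1 hM₁) (mem_powerset.1 hM₂) h
    rfl
  · intro G hG
    obtain ⟨T, hT⟩ := exists_isMinSpanningTree hw (mem_filter.1 hG).2
    exact ⟨⟨T, G.edgeFinset \ T.edgeFinset⟩, mem_sigma.2 ⟨mem_filter.2 ⟨mem_univ _, hT.2.1⟩,
      mem_powerset.2 hT.sdiff_subset_admissibleEdges⟩, sup_fromEdgeSet_sdiff hT.1⟩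

end SpanningTrees

section Stability

variable {V : Type*} {g : Matrix V V ℝ} {T : SimpleGraph V} {x y : V}

variable (g T) in
def negativeSubgraph : SimpleGraph V := T.deleteEdges {e | 0 ≤ pairCoupling g e}

lemma reachable_negativeSubgraph_iff (hT : T.IsAcyclic) (hxy : T.Adj x y) :
    (negativeSubgraph g T).Reachable x y ↔ pairCoupling g s(x, y) < 0 := by
  refine ⟨fun h ↦ not_le.1 ?_, fun h ↦ Adj.reachable ?_⟩
  · exact Separates.notMem_of_reachable_deleteEdges (s := {e | 0 ≤ pairCoupling g e})
      (isAcyclic_iff_forall_adj_isBridge.1 hT hxy) h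
  · rw [negativeSubgraph, deleteEdges_adj]
    exact ⟨hxy, not_le.2 h⟩

variable [Fintype V] [DecidableEq V] {α : Type*} [LinearOrder α] {w : Sym2 V → α}

lemma pairCoupling_nonneg_of_mem_admissibleEdges
    (hwv : ∀ e f, w e < w f → pairCoupling g e ≤ pairCoupling g f) (hT : T.IsTree)
    (he : s(x, y) ∈ admissibleEdges w T) (hR : ¬ (negativeSubgraph g T).Reachable x y) :
    0 ≤ pairCoupling g s(x, y) := by
  obtain ⟨p, hp⟩ := hT.connected.exists_isPath x y
  obtain ⟨f, hfp, hf⟩ : ∃ f ∈ p.edges, 0 ≤ pairCoupling g f := by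
    by_contra! hneg
    refine hR ⟨p.transfer _ fun e he ↦ ?_⟩
    rw [negativeSubgraph, edgeSet_deleteEdges]
    exact ⟨p.edges_subset_edgeSet he, not_le.2 (hneg e he)⟩
  exact hf.trans (hwv _ _ ((mem_admissibleEdges.1 he).2.2 f (p.edges_subset_edgeSet hfp)
    (separates_of_isAcyclic_of_mem_edges hT.isAcyclic hp hfp)))

lemma pairCoupling_nonpos_of_notMem_admissibleEdges (hw : Injective w)
    (hwv : ∀ e f, w e < w f → pairCoupling g e ≤ pairCoupling g f) (hxy : x ≠ y)
    (hT : ¬ T.Adj x y) (he : s(x, y) ∉ admissibleEdges w T)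
    (hR : (negativeSubgraph g T).Reachable x y) :
    pairCoupling g s(x, y) ≤ 0 := by
  obtain ⟨f, hfT, hsep, hnlt⟩ : ∃ f ∈ T.edgeSet, Separates T f s(x, y) ∧ ¬ w f < w s(x, y) := by
    by_contra! h
    exact he (mem_admissibleEdges.2 ⟨by simpa using hxy, hT, h⟩)
  have hlt : w s(x, y) < w f :=
    lt_of_le_of_ne (not_lt.1 hnlt) fun h ↦ hT (by rw [← mem_edgeSet, hw h]; exact hfT)
  have hf : ¬ 0 ≤ pairCoupling g f :=
    hsep.notMem_of_reachable_deleteEdges (s := {e | 0 ≤ pairCoupling g e}) hR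
  exact (hwv _ _ hlt).trans (not_le.1 hf).le

lemma ite_reachable_negativeSubgraph_le (hw : Injective w)
    (hwv : ∀ e f, w e < w f → pairCoupling g e ≤ pairCoupling g f) (hsymm : ∀ i j, g i j = g j i)
    (hT : T.IsTree) (x y : V) :
    (if x ≠ y ∧ (negativeSubgraph g T).Reachable x y then g x y else 0)
      ≤ (if s(x, y) ∈ {e ∈ T.edgeFinset | pairCoupling g e < 0} then g x y else 0)
        + if s(x, y) ∈ admissibleEdges w T then g x y else 0 := by
  have hv : pairCoupling g s(x, y) = 2 * g x y := by rw [pairCoupling_mk, hsymm y x]; ring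
  by_cases hA : T.Adj x y
  · have hX : s(x, y) ∉ admissibleEdges w T := fun h ↦ (mem_admissibleEdges.1 h).2.1 hA
    simp [hA.ne, hX, hA, reachable_negativeSubgraph_iff hT.isAcyclic hA]
  by_cases hX : s(x, y) ∈ admissibleEdges w T
  · have hxy : x ≠ y := by simpa using (mem_admissibleEdges.1 hX).1
    simp only [mem_filter, mem_edgeFinset, mem_edgeSet, hA, false_and, if_false, hX, if_true,
      zero_add]
    split_ifs with hR
    · exact le_rfl
    · linarith [pairCoupling_nonneg_of_mem_admissibleEdges hwv hT hX fun h ↦ hR ⟨hxy, h⟩]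
  · simp only [mem_filter, mem_edgeFinset, mem_edgeSet, hA, false_and, if_false, hX, add_zero]
    split_ifs with hR
    · linarith [pairCoupling_nonpos_of_notMem_admissibleEdges hw hwv hR.1 hA hX hR.2]
    · exact le_rfl

theorem sum_diag_add_sum_negative_add_sum_admissibleEdges_nonneg (hg : g.PosSemidef)
    (hw : Injective w) (hwv : ∀ e f, w e < w f → pairCoupling g e ≤ pairCoupling g f)
    (hT : T.IsTree) :
    0 ≤ ∑ i, g i i + ∑ e ∈ T.edgeFinset with pairCoupling g e < 0, pairCoupling g e
      + ∑ e ∈ admissibleEdges w T, pairCoupling g e := by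
  have hdiag : ∀ x y, (if (negativeSubgraph g T).Reachable x y then g x y else 0)
      = (if x = y then g x y else 0) + if x ≠ y ∧ (negativeSubgraph g T).Reachable x y
          then g x y else 0 := by
    intro x y
    by_cases hxy : x = y
    · subst hxy; simp
    · simp [hxy]
  -- Positive semidefiniteness on the components of the negative tree edges.
  have h₀ := hg.sum_sum_ite_eq_nonneg (negativeSubgraph g T).connectedComponentMk
  simp only [ConnectedComponent.eq, hdiag, sum_add_distrib, sum_ite_eq, mem_univ, if_true] at h₀
  rw [sum_pairCoupling_eq_sum_sum g fun e he ↦ not_isDiag_of_mem_edgeSet T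
      (mem_edgeFinset.1 (mem_filter.1 he).1),
    sum_pairCoupling_eq_sum_sum g fun e he ↦ not_isDiag_of_mem_admissibleEdges he, add_assoc]
  refine h₀.trans (add_le_add_right ?_ _)
  simp only [← sum_add_distrib]
  exact sum_le_sum fun x _ ↦ sum_le_sum fun y _ ↦
    ite_reachable_negativeSubgraph_le hw hwv hg.apply_comm hT x y

end Stability

section TreeBound

open Real

lemma exists_injective_lex_refining {β : Type*} [Countable β] (v : β → ℝ) :
    ∃ w : β → ℝ ×ₗ ℕ, Injective w ∧ ∀ a b, w a < w b → v a ≤ v b := by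
  obtain ⟨f, hf⟩ := exists_injective_nat β
  refine ⟨fun a ↦ toLex (v a, f a), fun a b h ↦ hf ?_, fun a b h ↦ ?_⟩
  · exact (Prod.ext_iff.1 (toLex.injective h)).2
  · exact (Prod.Lex.toLex_lt_toLex'.1 h).1

variable {V : Type*} {g : Matrix V V ℝ}

lemma prod_abs_mayerFunction_le (s : Finset (Sym2 V)) :
    ∏ e ∈ s, |mayerFunction g e|
      ≤ (∏ e ∈ s, |pairCoupling g e|)
          * exp (-∑ e ∈ s with pairCoupling g e < 0, pairCoupling g e) := by
  have hneg : -∑ e ∈ s with pairCoupling g e < 0, pairCoupling g e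
      = ∑ e ∈ s, max (-pairCoupling g e) 0 := by
    rw [sum_filter, ← sum_neg_distrib]
    refine sum_congr rfl fun e _ ↦ ?_
    split_ifs with h
    · rw [max_eq_left (by linarith)]
    · rw [max_eq_right (by linarith), neg_zero]
  rw [hneg, exp_sum, ← prod_mul_distrib]
  refine prod_le_prod (fun _ _ ↦ abs_nonneg _) fun e _ ↦ ?_
  simpa [mayerFunction, abs_neg] using abs_exp_sub_one_le_mul_exp_max (-pairCoupling g e)

variable [Fintype V] [DecidableEq V] {α : Type*} [LinearOrder α] {w : Sym2 V → α}
  {T : SimpleGraph V}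

lemma mul_abs_treeTerm_le (hg : g.PosSemidef) (hw : Injective w)
    (hwv : ∀ e f, w e < w f → pairCoupling g e ≤ pairCoupling g f) (hT : T.IsTree) :
    (∏ i, exp (-g i i)) * |(∏ e ∈ T.edgeFinset, mayerFunction g e)
        * ∏ e ∈ admissibleEdges w T, (1 + mayerFunction g e)|
      ≤ ∏ e ∈ T.edgeFinset, |pairCoupling g e| := by
  have hstab := sum_diag_add_sum_negative_add_sum_admissibleEdges_nonneg hg hw hwv hT
  have hexp : ∀ e, 1 + mayerFunction g e = exp (-pairCoupling g e) := fun e ↦ by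
    rw [mayerFunction, add_sub_cancel]
  simp only [hexp, ← exp_sum, abs_mul, abs_exp, abs_prod, sum_neg_distrib]
  calc exp (-∑ i, g i i) * ((∏ e ∈ T.edgeFinset, |mayerFunction g e|)
        * exp (-∑ e ∈ admissibleEdges w T, pairCoupling g e))
      ≤ exp (-∑ i, g i i) * ((∏ e ∈ T.edgeFinset, |pairCoupling g e|)
          * exp (-∑ e ∈ T.edgeFinset with pairCoupling g e < 0, pairCoupling g e)
          * exp (-∑ e ∈ admissibleEdges w T, pairCoupling g e)) := by
        gcongr
        exact prod_abs_mayerFunction_le _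
    _ = (∏ e ∈ T.edgeFinset, |pairCoupling g e|) * exp (-(∑ i, g i i
          + ∑ e ∈ T.edgeFinset with pairCoupling g e < 0, pairCoupling g e
          + ∑ e ∈ admissibleEdges w T, pairCoupling g e)) := by
        rw [neg_add, neg_add, exp_add, exp_add]
        ring
    _ ≤ ∏ e ∈ T.edgeFinset, |pairCoupling g e| :=
        mul_le_of_le_one_right (prod_nonneg fun _ _ ↦ abs_nonneg _)
          (exp_le_one_iff.2 (neg_nonpos.2 hstab))

end TreeBound

end TreeGraphBound

end

open TreeGraphBound

open scoped Classical in
/-- **Battle–Brydges–Federbush tree-graph bound.** Let `g` be a real symmetric positive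
semidefinite `n×n` matrix, `V Y = ∑_{j,j'∈Y} g j j'`, and let `φ` be the Ursell functions,
defined by `φ {j} = exp (-V {j})` and, for `|Y| ≥ 2`, by
`exp (-V Y) = ∑_{partitions π of Y} ∏_{B ∈ π} φ B`. Then `|φ {1,…,n}|` is bounded by the sum
over all trees `T` on `{1,…,n}` of the product over the edges of `T` of `2 |g j j'|`. -/
theorem bbf_tree_bound (n : ℕ) (hn : 1 ≤ n) (g : Matrix (Fin n) (Fin n) ℝ)
    (hg : g.PosSemidef) (φ : Finset (Fin n) → ℝ)
    (hφ1 : ∀ j : Fin n, φ {j} = Real.exp (-(∑ i ∈ ({j} : Finset (Fin n)),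
        ∑ i' ∈ ({j} : Finset (Fin n)), g i i')))
    (hφ2 : ∀ Y : Finset (Fin n), 2 ≤ Y.card →
        Real.exp (-(∑ i ∈ Y, ∑ i' ∈ Y, g i i')) =
          ∑ P ∈ Finset.univ.filter (fun P : Finset (Finset (Fin n)) => IsPartitionOf P Y),
            ∏ B ∈ P, φ B) :
    |φ Finset.univ| ≤
      ∑ T ∈ Finset.univ.filter (fun T : SimpleGraph (Fin n) => T.IsTree),
        ∏ e ∈ T.edgeFinset,
          Sym2.lift ⟨fun j j' => 2 * |g j j'|,
            fun j j' => by
              simp only []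
              rw [show g j j' = g j' j from by simpa using (hg.1.apply j j').symm]⟩ e := by
  have : Nonempty (Fin n) := ⟨⟨0, hn⟩⟩
  obtain ⟨w, hw, hwv⟩ := exists_injective_lex_refining (pairCoupling g)
  have hφ : φ univ = ursellFunction g univ :=
    eq_ursellFunction_of_partitionSum g (fun j ↦ by simpa using hφ1 j) hφ2 univ_nonempty
  rw [hφ, ursellFunction, connectedSum_univ, sum_connected_eq_sum_isTree hw, mul_sum]
  refine (abs_sum_le_sum_abs _ _).trans (sum_le_sum fun T hT ↦ ?_)
  rw [abs_mul, abs_of_pos (prod_pos fun i _ ↦ Real.exp_pos _)]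
  refine (mul_abs_treeTerm_le hg hw hwv (mem_filter.1 hT).2).trans_eq
    (prod_congr rfl fun e _ ↦ ?_)
  induction e with
  | h x y =>
    rw [pairCoupling_mk, Sym2.lift_mk, hg.apply_comm y x, ← two_mul, abs_mul, abs_two]
end

section
/- There is a constant C_ξ > 0, depending only on ξ, such that the following holds. Let a > 0, K ∈ ℕ with K ≥ 1, L = K a, M > 0 with M a ≥ 1, and 0 ≤ ξ < 1. Let 𝒦 = {2πn/L : n ∈ ℤ^4} ∩ [-π/a, π/a)^4, and for k ∈ 𝒦 set σ_μ(k) = (e^{i k_μ a} - 1)/a and |σ(k)|^2 = Σ_{μ=0}^3 |σ_μ(k)|^2. Define, for x, y in the lattice Λ = aℤ^4 ∩ [0,L)^4 and μ,ν ∈ {0,1,2,3}, g^A_{μν}(x,y) = (1/L^4) Σ_{k∈𝒦} e^{i k·(x-y)} (|σ(k)|^2 + M^2)^{-1} (δ_{μν} + ξ · conj(σ_μ(k)) σ_ν(k) / ((1-ξ)|σ(k)|^2 + M^2)). Then |g^A_{μν}(x,y)| ≤ C_ξ a^{-2} for all x, y, μ, ν. -/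
/-!
Crude bound, mode by mode: `|σ_μ(k)| ≤ 2/a` and `M² ≥ a⁻²` bound every Fourier coefficient
`covEntry` by `(1 + 4|ξ|) a²` (for `ξ ≤ 1` the gauge denominator is at least `M²`), and there are
at most `(2K)⁴` momenta, so the normalisation `L⁻⁴ = (Ka)⁻⁴` leaves `16 (1 + 4|ξ|) a⁻²`.
-/

open scoped Real

/-- The lattice symbol `σ_μ(k) = (e^{i k_μ a} - 1)/a`. -/
noncomputable def latticeSigma (a : ℝ) (k : Fin 4 → ℝ) (μ : Fin 4) : ℂ :=
  (Complex.exp (Complex.I * (k μ * a)) - 1) / a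

/-- `|σ(k)|² = ∑_μ |σ_μ(k)|²`. -/
noncomputable def latticeSigmaSq (a : ℝ) (k : Fin 4 → ℝ) : ℝ :=
  ∑ μ : Fin 4, Complex.normSq (latticeSigma a k μ)

/-- The momentum-space covariance
`(|σ(k)|² + M²)⁻¹ (δ_{μν} + ξ conj(σ_μ(k)) σ_ν(k) / ((1-ξ)|σ(k)|² + M²))`. -/
noncomputable def covEntry (a M ξ : ℝ) (k : Fin 4 → ℝ) (μ ν : Fin 4) : ℂ :=
  (((latticeSigmaSq a k + M ^ 2)⁻¹ : ℝ) : ℂ) *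
    ((if μ = ν then 1 else 0) +
      (ξ : ℂ) * (starRingEnd ℂ (latticeSigma a k μ)) * latticeSigma a k ν /
        ((((1 - ξ) * latticeSigmaSq a k + M ^ 2 : ℝ)) : ℂ))

/-- The bosonic momenta: integers `m` with `2πm/L ∈ [-π/a, π/a)`, i.e. `-K ≤ 2m < K`. -/
noncomputable def bosonMom (K : ℕ) : Finset ℤ :=
  (Finset.Ico (-(K : ℤ)) (K : ℤ)).filter (fun m => -(K : ℤ) ≤ 2 * m ∧ 2 * m < (K : ℤ))

/-- The position-space covariance of the non-compact massive lattice `U(1)` field,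
`g^A_{μν}(x,y) = L⁻⁴ ∑_{k ∈ 𝒦} e^{i k⋅(x-y)} covEntry(k)_{μν}`, with `L = K a` and
`k = 2πm/L`, `m ∈ bosonMom K`. -/
noncomputable def gaugeCov (a : ℝ) (K : ℕ) (M ξ : ℝ) (μ ν : Fin 4) (x y : Fin 4 → ℝ) : ℂ :=
  (((K : ℝ) * a) ^ 4)⁻¹ *
    ∑ m ∈ Fintype.piFinset (fun _ : Fin 4 => bosonMom K),
      Complex.exp (Complex.I *
          ((∑ ρ : Fin 4, (2 * π * (m ρ : ℝ) / ((K : ℝ) * a)) * (x ρ - y ρ) : ℝ) : ℂ)) *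
        covEntry a M ξ (fun ρ => 2 * π * (m ρ : ℝ) / ((K : ℝ) * a)) μ ν

open Finset Complex

lemma norm_latticeSigma_le {a : ℝ} (ha : 0 < a) (k : Fin 4 → ℝ) (μ : Fin 4) :
    ‖latticeSigma a k μ‖ ≤ 2 / a := by
  have hexp : ‖exp (I * (k μ * a)) - 1‖ ≤ 2 := by
    calc ‖exp (I * (k μ * a)) - 1‖ ≤ ‖exp (I * ((k μ * a : ℝ) : ℂ))‖ + ‖(1 : ℂ)‖ := by
          push_cast; exact norm_sub_le _ _
      _ = 2 := by rw [norm_exp_I_mul_ofReal, norm_one]; norm_num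
  rw [latticeSigma, norm_div, norm_real, Real.norm_of_nonneg ha.le]
  gcongr

lemma latticeSigmaSq_nonneg (a : ℝ) (k : Fin 4 → ℝ) : 0 ≤ latticeSigmaSq a k :=
  sum_nonneg fun _ _ => normSq_nonneg _

lemma inv_sq_le_sq_of_one_le_mul {a M : ℝ} (ha : 0 < a) (hMa : 1 ≤ M * a) :
    (a ^ 2)⁻¹ ≤ M ^ 2 := by
  rw [inv_le_iff_one_le_mul₀ (by positivity)]
  nlinarith

lemma norm_covEntry_le {a M ξ : ℝ} (ha : 0 < a) (hMa : 1 ≤ M * a) (hξ : ξ ≤ 1)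
    (k : Fin 4 → ℝ) (μ ν : Fin 4) :
    ‖covEntry a M ξ k μ ν‖ ≤ a ^ 2 * (1 + 4 * |ξ|) := by
  set S := latticeSigmaSq a k
  have hS : 0 ≤ S := latticeSigmaSq_nonneg a k
  have hM : (a ^ 2)⁻¹ ≤ M ^ 2 := inv_sq_le_sq_of_one_le_mul ha hMa
  have ha2 : 0 < (a ^ 2)⁻¹ := by positivity
  have hD : (a ^ 2)⁻¹ ≤ (1 - ξ) * S + M ^ 2 := by nlinarith
  have hD0 : 0 < (1 - ξ) * S + M ^ 2 := by linarith
  have hprefactor : ‖(((S + M ^ 2)⁻¹ : ℝ) : ℂ)‖ ≤ a ^ 2 := by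
    rw [norm_real, Real.norm_of_nonneg (by positivity), inv_le_comm₀ (by linarith) (by positivity)]
    linarith
  have hσσ : ‖latticeSigma a k μ‖ * ‖latticeSigma a k ν‖ ≤ 4 * (a ^ 2)⁻¹ := by
    calc ‖latticeSigma a k μ‖ * ‖latticeSigma a k ν‖ ≤ (2 / a) * (2 / a) := by
          gcongr <;> exact norm_latticeSigma_le ha k _
      _ = 4 * (a ^ 2)⁻¹ := by field_simp; ring
  have hgauge : ‖(ξ : ℂ) * starRingEnd ℂ (latticeSigma a k μ) * latticeSigma a k ν /
      (((1 - ξ) * S + M ^ 2 : ℝ) : ℂ)‖ ≤ 4 * |ξ| := by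
    rw [norm_div, norm_mul, norm_mul, norm_conj, norm_real, norm_real, Real.norm_eq_abs,
      Real.norm_of_nonneg hD0.le, div_le_iff₀ hD0, mul_assoc]
    calc |ξ| * (‖latticeSigma a k μ‖ * ‖latticeSigma a k ν‖) ≤ |ξ| * (4 * (a ^ 2)⁻¹) := by
          gcongr
      _ ≤ 4 * |ξ| * ((1 - ξ) * S + M ^ 2) := by nlinarith [abs_nonneg ξ]
  have hdelta : ‖(if μ = ν then (1 : ℂ) else 0)‖ ≤ 1 := by split_ifs <;> simp
  rw [covEntry, norm_mul]
  gcongr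
  exact (norm_add_le _ _).trans (by linarith)

lemma card_bosonMom_le (K : ℕ) : #(bosonMom K) ≤ 2 * K :=
  (card_filter_le _ _).trans (by rw [Int.card_Ico]; omega)

lemma norm_sum_exp_mul_le {ι : Type*} (s : Finset ι) (θ : ι → ℝ) (f : ι → ℂ) {B : ℝ}
    (hf : ∀ i ∈ s, ‖f i‖ ≤ B) : ‖∑ i ∈ s, exp (I * θ i) * f i‖ ≤ #s * B := by
  refine (norm_sum_le _ _).trans ?_
  rw [← nsmul_eq_mul]
  refine sum_le_card_nsmul _ _ _ fun i hi => ?_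
  rw [norm_mul, norm_exp_I_mul_ofReal, one_mul]
  exact hf i hi

lemma norm_gaugeCov_le {a M ξ : ℝ} {K : ℕ} (ha : 0 < a) (hK : 0 < K) (hMa : 1 ≤ M * a)
    (hξ : ξ ≤ 1) (μ ν : Fin 4) (x y : Fin 4 → ℝ) :
    ‖gaugeCov a K M ξ μ ν x y‖ ≤ 16 * (1 + 4 * |ξ|) / a ^ 2 := by
  have hcard : #(Fintype.piFinset fun _ : Fin 4 => bosonMom K) ≤ (2 * K) ^ 4 := by
    rw [Fintype.card_piFinset, prod_const, card_univ, Fintype.card_fin]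
    exact Nat.pow_le_pow_left (card_bosonMom_le K) 4
  have hK' : (0 : ℝ) < K := by exact_mod_cast hK
  rw [gaugeCov, norm_mul, norm_real, Real.norm_of_nonneg (by positivity)]
  calc ((K * a) ^ 4)⁻¹ * ‖∑ m ∈ Fintype.piFinset fun _ : Fin 4 => bosonMom K, _‖
      ≤ ((K * a) ^ 4)⁻¹ * (((2 * K) ^ 4 : ℕ) * (a ^ 2 * (1 + 4 * |ξ|))) := by
        gcongr
        refine (norm_sum_exp_mul_le _ _ _ fun m _ => norm_covEntry_le ha hMa hξ _ μ ν).trans ?_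
        gcongr
    _ = 16 * (1 + 4 * |ξ|) / a ^ 2 := by
        push_cast
        field_simp
        ring

theorem gaugeCov_pointwise_bound_general (ξ : ℝ) (hξ1 : ξ < 1) :
    ∃ C : ℝ, 0 < C ∧
      ∀ (a : ℝ), 0 < a → ∀ (K : ℕ), 1 ≤ K → ∀ (M : ℝ), 0 < M → 1 ≤ M * a →
      ∀ (mx my : Fin 4 → Fin K) (μ ν : Fin 4),
        ‖gaugeCov a K M ξ μ ν (fun ρ => a * (mx ρ : ℝ)) (fun ρ => a * (my ρ : ℝ))‖
          ≤ C / a ^ 2 :=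
  ⟨16 * (1 + 4 * |ξ|), by positivity, fun _a ha _K hK _M _ hMa _ _ μ ν =>
    norm_gaugeCov_le ha hK hMa hξ1.le μ ν _ _⟩

/-- Pointwise bound on the gauge covariance: `|g^A_{μν}(x,y)| ≤ C_ξ a⁻²`, with `C_ξ`
depending only on the gauge-fixing parameter `ξ`, uniformly on the lattice
`Λ = aℤ⁴ ∩ [0,L)⁴` and in `L = Ka`, for `M a ≥ 1`. -/
theorem gaugeCov_pointwise_bound (ξ : ℝ) (hξ0 : 0 ≤ ξ) (hξ1 : ξ < 1) :
    ∃ C : ℝ, 0 < C ∧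
      ∀ (a : ℝ), 0 < a → ∀ (K : ℕ), 1 ≤ K → ∀ (M : ℝ), 0 < M → 1 ≤ M * a →
      ∀ (mx my : Fin 4 → Fin K) (μ ν : Fin 4),
        ‖gaugeCov a K M ξ μ ν (fun ρ => a * (mx ρ : ℝ)) (fun ρ => a * (my ρ : ℝ))‖
          ≤ C / a ^ 2 :=
  gaugeCov_pointwise_bound_general ξ hξ1
end

section
/- There is a constant C_ξ > 0, depending only on ξ, such that the following holds. Let a > 0, K ∈ ℕ with K ≥ 1, L = K a, M > 0 with M a ≥ 1, and 0 ≤ ξ < 1. With 𝒦 = {2πn/L : n ∈ ℤ^4} ∩ [-π/a, π/a)^4, σ_μ(k) = (e^{i k_μ a} - 1)/a, |σ(k)|^2 = Σ_μ |σ_μ(k)|^2, and g^A_{μν}(x,y) = (1/L^4) Σ_{k∈𝒦} e^{i k·(x-y)} (|σ(k)|^2 + M^2)^{-1} (δ_{μν} + ξ conj(σ_μ(k)) σ_ν(k)/((1-ξ)|σ(k)|^2 + M^2)) for x,y in Λ = aℤ^4 ∩ [0,L)^4, one has a^4 Σ_{x∈Λ} |g^A_{μν}(x,y)| ≤ C_ξ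 M^{-2} for every y ∈ Λ and every μ,ν, uniformly in L. -/
/-!
Write `G_c` for the lattice Fourier transform of the scalar propagator `(c |σ(k)|² + M²)⁻¹`.
The partial fraction `ξ / ((A + M²)((1 - ξ) A + M²)) = M⁻² ((A + M²)⁻¹ - (1 - ξ)((1 - ξ) A + M²)⁻¹)`
and `conj σ_μ σ_ν = a⁻² (e^{-i k_μ a} - 1)(e^{i k_ν a} - 1)` turn `g^A_{μν}` into
`L⁻⁴ (δ_{μν} G₁ + (aM)⁻² ∂_{-μ} ∂_ν (G₁ - (1 - ξ) G_{1-ξ}))`, with `∂` lattice forward differences.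
Each `G_c` is pointwise nonnegative: `|σ|²` is affine in `S(k) = ∑_ρ cos (k_ρ a)`, so the propagator
is a geometric series in `S` with nonnegative coefficients, and multiplying by `S` averages a
transform over nearest neighbours. Hence the ℓ¹ norm of `G_c` over a period is its sum, which is
`K⁴` times the propagator at `k = 0`, i.e. `K⁴ / M²`. The triangle inequality and `(aM)⁻² ≤ 1`
then give the bound with `C = 9 - 4ξ`.
-/

open scoped Real

open scoped ComplexOrder fwdDiff
open Finset ComplexConjugate

noncomputable def intChar (K : ℕ) [NeZero K] : AddChar ℤ ℂ :=
  ZMod.stdAddChar.compAddMonoidHom (Int.castAddHom (ZMod K))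

section IntChar

variable {K : ℕ} [NeZero K]

lemma intChar_apply_eq_stdAddChar (n : ℤ) : intChar K n = ZMod.stdAddChar (n : ZMod K) := rfl

lemma intChar_apply (n : ℤ) : intChar K n = Complex.exp (2 * π * Complex.I * n / K) :=
  ZMod.stdAddChar_coe n

lemma norm_intChar (n : ℤ) : ‖intChar K n‖ = 1 := Circle.norm_coe _

lemma intChar_neg (n : ℤ) : intChar K (-n) = conj (intChar K n) := by
  rw [intChar_apply_eq_stdAddChar, intChar_apply_eq_stdAddChar, Int.cast_neg,
    AddChar.map_neg_eq_conj]

lemma intChar_mul_intChar_neg (n : ℤ) : intChar K n * intChar K (-n) = 1 := by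
  rw [← AddChar.map_add_eq_mul, add_neg_cancel, AddChar.map_zero_eq_one]

lemma intChar_sum {ι : Type*} (s : Finset ι) (f : ι → ℤ) :
    intChar K (∑ i ∈ s, f i) = ∏ i ∈ s, intChar K (f i) := by
  classical
  induction s using Finset.induction_on with
  | empty => simp
  | insert i s hi ih => rw [sum_insert hi, prod_insert hi, AddChar.map_add_eq_mul, ih]

end IntChar

lemma bosonMom_eq_Ico (K : ℕ) : bosonMom K = Ico (-((K : ℤ) / 2)) (-((K : ℤ) / 2) + K) := by
  ext m
  simp only [bosonMom, mem_filter, mem_Ico]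
  omega

lemma intCast_injOn_bosonMom (K : ℕ) : Set.InjOn (Int.cast : ℤ → ZMod K) (bosonMom K) := by
  intro m hm m' hm' h
  rw [ZMod.intCast_eq_intCast_iff_dvd_sub] at h
  simp only [mem_coe, bosonMom_eq_Ico, mem_Ico] at hm hm'
  have := Int.eq_zero_of_abs_lt_dvd h (by rw [abs_lt]; omega)
  omega

section Orthogonality

variable {K : ℕ} [NeZero K]

lemma zero_mem_bosonMom : (0 : ℤ) ∈ bosonMom K := by
  have := NeZero.pos K
  rw [bosonMom_eq_Ico, mem_Ico]
  omega

lemma sum_bosonMom_intCast (g : ZMod K → ℂ) : ∑ m ∈ bosonMom K, g m = ∑ z, g z := by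
  rw [← sum_image (intCast_injOn_bosonMom K)]
  congr
  apply eq_univ_of_card
  rw [card_image_of_injOn (intCast_injOn_bosonMom K), bosonMom_eq_Ico, Int.card_Ico, ZMod.card]
  omega

lemma sum_fin_natCast (g : ZMod K → ℂ) : ∑ x : Fin K, g (x : ℕ) = ∑ z, g z := by
  refine Fintype.sum_bijective _ ((Fintype.bijective_iff_injective_and_card _).2 ⟨?_, by simp⟩) _ _
    fun _ => rfl
  intro x y h
  have := congrArg ZMod.val h
  simp only [ZMod.val_natCast, Nat.mod_eq_of_lt x.isLt, Nat.mod_eq_of_lt y.isLt] at this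
  exact Fin.ext this

lemma sum_bosonMom_intChar_mul (l : ℤ) :
    ∑ m ∈ bosonMom K, intChar K (m * l) = if (l : ZMod K) = 0 then (K : ℂ) else 0 := by
  simp_rw [intChar_apply_eq_stdAddChar, Int.cast_mul]
  rw [sum_bosonMom_intCast (fun z => ZMod.stdAddChar (z * (l : ZMod K))),
    AddChar.sum_mulShift _ (ZMod.isPrimitive_stdAddChar K), ZMod.card, Nat.cast_ite,
    Nat.cast_zero]

lemma sum_fin_intChar_mul (m : ℤ) :
    ∑ x : Fin K, intChar K (m * x) = if (m : ZMod K) = 0 then (K : ℂ) else 0 := by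
  simp_rw [intChar_apply_eq_stdAddChar, mul_comm m, Int.cast_mul, Int.cast_natCast]
  rw [sum_fin_natCast (fun z => ZMod.stdAddChar (z * (m : ZMod K))),
    AddChar.sum_mulShift _ (ZMod.isPrimitive_stdAddChar K), ZMod.card, Nat.cast_ite,
    Nat.cast_zero]

lemma sum_box_intChar_dotProduct {ι : Type*} [Fintype ι] [DecidableEq ι] {m : ι → ℤ}
    (hm : m ∈ Fintype.piFinset fun _ => bosonMom K) :
    ∑ x : ι → Fin K, intChar K (m ⬝ᵥ fun i => (x i : ℤ)) =
      if m = 0 then (K : ℂ) ^ Fintype.card ι else 0 := by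
  simp_rw [dotProduct, intChar_sum, ← Fintype.prod_sum fun i (t : Fin K) => intChar K (m i * t),
    sum_fin_intChar_mul]
  split_ifs with h
  · simp [h]
  · obtain ⟨i, hi⟩ := Function.ne_iff.1 h
    refine prod_eq_zero (mem_univ i) (if_neg fun h0 => hi ?_)
    exact intCast_injOn_bosonMom K (Fintype.mem_piFinset.1 hm i) zero_mem_bosonMom
      (by simpa using h0)

end Orthogonality

-- With `k = 2πm/L` and `x = a j`, the phase `e^{i k⋅x}` of the paper is `intChar K (m ⬝ᵥ j)`.
noncomputable def latticeFourier (K : ℕ) [NeZero K] (ι : Type*) [Fintype ι] [DecidableEq ι] :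
    ((ι → ℤ) → ℂ) →ₗ[ℂ] (ι → ℤ) → ℂ where
  toFun f j := ∑ m ∈ Fintype.piFinset (fun _ : ι => bosonMom K), intChar K (m ⬝ᵥ j) * f m
  map_add' f g := by
    ext j
    simp only [Pi.add_apply, mul_add, sum_add_distrib]
  map_smul' c f := by
    ext j
    simp only [Pi.smul_apply, smul_eq_mul, RingHom.id_apply, mul_sum, mul_left_comm]

section LatticeFourier

variable {K : ℕ} [NeZero K] {ι : Type*} [Fintype ι] [DecidableEq ι]

lemma latticeFourier_apply (f : (ι → ℤ) → ℂ) (j : ι → ℤ) :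
    latticeFourier K ι f j =
      ∑ m ∈ Fintype.piFinset (fun _ : ι => bosonMom K), intChar K (m ⬝ᵥ j) * f m := rfl

lemma latticeFourier_intChar_mul (v : ι → ℤ) (f : (ι → ℤ) → ℂ) :
    latticeFourier K ι (fun m => intChar K (m ⬝ᵥ v) * f m) =
      fun j => latticeFourier K ι f (j + v) := by
  ext j
  simp only [latticeFourier_apply, dotProduct_add, AddChar.map_add_eq_mul, mul_assoc]

lemma latticeFourier_intChar_sub_one_mul (v : ι → ℤ) (f : (ι → ℤ) → ℂ) :
    latticeFourier K ι (fun m => (intChar K (m ⬝ᵥ v) - 1) * f m) =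
      Δ_[v] (latticeFourier K ι f) := by
  ext j
  simp only [sub_mul, one_mul]
  rw [← Pi.sub_def, map_sub, Pi.sub_apply, latticeFourier_intChar_mul, fwdDiff]

lemma sum_box_latticeFourier (f : (ι → ℤ) → ℂ) (w : ι → ℤ) :
    ∑ x : ι → Fin K, latticeFourier K ι f (fun i => x i + w i) = K ^ Fintype.card ι * f 0 := by
  have hsplit (m : ι → ℤ) (x : ι → Fin K) : intChar K (m ⬝ᵥ fun i => x i + w i) * f m =
      intChar K (m ⬝ᵥ w) * f m * intChar K (m ⬝ᵥ fun i => (x i : ℤ)) := by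
    rw [show (fun i => (x i : ℤ) + w i) = (fun i => (x i : ℤ)) + w from rfl, dotProduct_add,
      AddChar.map_add_eq_mul]
    ring
  simp_rw [latticeFourier_apply, hsplit]
  rw [sum_comm]
  simp_rw [← mul_sum]
  have h0 : (0 : ι → ℤ) ∈ Fintype.piFinset fun _ => bosonMom K :=
    Fintype.mem_piFinset.2 fun _ => zero_mem_bosonMom
  rw [sum_eq_single_of_mem 0 h0 fun m hm hm0 => by
    rw [sum_box_intChar_dotProduct hm, if_neg hm0, mul_zero], sum_box_intChar_dotProduct h0,
    if_pos rfl, zero_dotProduct, AddChar.map_zero_eq_one, one_mul, mul_comm]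

end LatticeFourier

noncomputable def cosSum (K : ℕ) [NeZero K] {ι : Type*} [Fintype ι] (m : ι → ℤ) : ℂ :=
  ∑ i, (intChar K (m i) + intChar K (-m i)) / 2

section Positivity

variable {K : ℕ} [NeZero K] {ι : Type*} [Fintype ι] [DecidableEq ι]

omit [DecidableEq ι] in
lemma norm_cosSum_le (m : ι → ℤ) : ‖cosSum K m‖ ≤ Fintype.card ι := by
  calc ‖cosSum K m‖ ≤ ∑ _i : ι, (1 : ℝ) := (norm_sum_le _ _).trans <| sum_le_sum fun i _ => by
        rw [norm_div, Complex.norm_two]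
        linarith [norm_add_le (intChar K (m i)) (intChar K (-m i)), norm_intChar (K := K) (m i),
          norm_intChar (K := K) (-m i)]
    _ = Fintype.card ι := by simp

lemma latticeFourier_cosSum_mul (f : (ι → ℤ) → ℂ) (j : ι → ℤ) :
    latticeFourier K ι (cosSum K * f) j =
      ∑ i, (latticeFourier K ι f (j + Pi.single i 1) +
        latticeFourier K ι f (j + -Pi.single i 1)) / 2 := by
  have hsplit : cosSum K * f = ∑ i, (2⁻¹ : ℂ) • ((fun m => intChar K (m ⬝ᵥ Pi.single i 1) * f m) +
      fun m => intChar K (m ⬝ᵥ -Pi.single i 1) * f m) := by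
    ext m
    simp only [Pi.mul_apply, cosSum, Finset.sum_apply, Pi.smul_apply, Pi.add_apply, dotProduct_neg,
      dotProduct_single, mul_one, sum_mul, smul_eq_mul]
    refine sum_congr rfl fun i _ => by ring
  simp only [hsplit, map_sum, map_smul, map_add, latticeFourier_intChar_mul, Finset.sum_apply,
    Pi.smul_apply, Pi.add_apply, smul_eq_mul]
  refine sum_congr rfl fun i _ => by ring

lemma latticeFourier_one_nonneg (j : ι → ℤ) : 0 ≤ latticeFourier K ι 1 j := by
  have hprod : latticeFourier K ι 1 j = ∏ i, ∑ t ∈ bosonMom K, intChar K (t * j i) := by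
    simp only [prod_univ_sum, latticeFourier_apply, dotProduct, intChar_sum, Pi.one_apply, mul_one]
  rw [hprod]
  refine prod_nonneg fun i _ => ?_
  rw [sum_bosonMom_intChar_mul]
  split_ifs <;> simp

lemma latticeFourier_cosSum_pow_nonneg (n : ℕ) (j : ι → ℤ) :
    0 ≤ latticeFourier K ι (cosSum K ^ n) j := by
  induction n generalizing j with
  | zero => exact latticeFourier_one_nonneg j
  | succ n ih =>
    rw [pow_succ', latticeFourier_cosSum_mul]
    exact sum_nonneg fun i _ => div_nonneg (add_nonneg (ih _) (ih _)) (by norm_num)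

lemma latticeFourier_nonneg_of_hasSum {f : ℕ → (ι → ℤ) → ℂ} {g : (ι → ℤ) → ℂ}
    (hfg : ∀ m, HasSum (fun n => f n m) (g m)) (hf : ∀ n j, 0 ≤ latticeFourier K ι (f n) j)
    (j : ι → ℤ) : 0 ≤ latticeFourier K ι g j :=
  (hasSum_sum fun m _ => (hfg m).mul_left (intChar K (m ⬝ᵥ j))).nonneg fun n => hf n j

lemma latticeFourier_inv_sub_cosSum_nonneg {D E : ℝ} (hE : 0 ≤ E)
    (hED : E * Fintype.card ι < D) (j : ι → ℤ) :
    0 ≤ latticeFourier K ι (fun m => ((D : ℂ) - E * cosSum K m)⁻¹) j := by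
  have hD : 0 < D := (mul_nonneg hE (Nat.cast_nonneg _)).trans_lt hED
  refine latticeFourier_nonneg_of_hasSum
    (f := fun n => ((D⁻¹ * (E / D) ^ n : ℝ) : ℂ) • cosSum K ^ n) (fun m => ?_)
    (fun n j => ?_) j
  · have hr : ‖((E / D : ℝ) : ℂ) * cosSum K m‖ < 1 := by
      rw [norm_mul, Complex.norm_real, Real.norm_of_nonneg (by positivity), div_mul_eq_mul_div,
        div_lt_one hD]
      exact (mul_le_mul_of_nonneg_left (norm_cosSum_le m) hE).trans_lt hED
    have hgeom := (hasSum_geometric_of_norm_lt_one hr).mul_left ((D : ℂ)⁻¹)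
    rw [← mul_inv, mul_sub, mul_one, ← mul_assoc, Complex.ofReal_div,
      mul_div_cancel₀ _ (Complex.ofReal_ne_zero.2 hD.ne')] at hgeom
    have hterm : (fun n => (((D⁻¹ * (E / D) ^ n : ℝ) : ℂ) • cosSum K ^ n) m) =
        fun n => (D : ℂ)⁻¹ * (E / D * cosSum K m) ^ n := by
      ext n
      simp only [Pi.smul_apply, Pi.pow_apply, smul_eq_mul]
      push_cast
      ring
    rw [hterm]
    exact hgeom
  · rw [map_smul]
    exact mul_nonneg (Complex.zero_le_real.2 (by positivity)) (latticeFourier_cosSum_pow_nonneg n j)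

end Positivity

def BoxL1Le (K : ℕ) {ι : Type*} [Fintype ι] [DecidableEq ι] (B : ℝ) (G : (ι → ℤ) → ℂ) : Prop :=
  ∀ w : ι → ℤ, ∑ x : ι → Fin K, ‖G (fun i => x i + w i)‖ ≤ B

namespace BoxL1Le

variable {K : ℕ} {ι : Type*} [Fintype ι] [DecidableEq ι] {B B' : ℝ} {G G' : (ι → ℤ) → ℂ}

lemma mono (hG : BoxL1Le K B G) (hB : B ≤ B') : BoxL1Le K B' G := fun w => (hG w).trans hB

lemma add (hG : BoxL1Le K B G) (hG' : BoxL1Le K B' G') : BoxL1Le K (B + B') (G + G') := fun w =>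
  (sum_le_sum fun _ _ => norm_add_le _ _).trans <|
    sum_add_distrib.trans_le <| add_le_add (hG w) (hG' w)

lemma sub (hG : BoxL1Le K B G) (hG' : BoxL1Le K B' G') : BoxL1Le K (B + B') (G - G') := fun w =>
  (sum_le_sum fun _ _ => norm_sub_le _ _).trans <|
    sum_add_distrib.trans_le <| add_le_add (hG w) (hG' w)

lemma const_smul (hG : BoxL1Le K B G) (c : ℂ) : BoxL1Le K (‖c‖ * B) (c • G) := fun w => by
  simp only [Pi.smul_apply, smul_eq_mul, norm_mul, ← mul_sum]
  exact mul_le_mul_of_nonneg_left (hG w) (norm_nonneg c)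

lemma comp_add_right (hG : BoxL1Le K B G) (v : ι → ℤ) : BoxL1Le K B fun j => G (j + v) :=
  fun w => by simpa only [Pi.add_def, add_assoc] using hG (w + v)

lemma fwdDiff (hG : BoxL1Le K B G) (v : ι → ℤ) : BoxL1Le K (2 * B) (Δ_[v] G) :=
  (two_mul B).symm ▸ (hG.comp_add_right v).sub hG

end BoxL1Le

lemma sum_norm_eq_norm_sum_of_nonneg {α : Type*} {s : Finset α} {z : α → ℂ}
    (hz : ∀ a ∈ s, 0 ≤ z a) :
    ∑ a ∈ s, ‖z a‖ = ‖∑ a ∈ s, z a‖ := by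
  apply Complex.ofReal_injective
  rw [Complex.norm_of_nonneg' (sum_nonneg hz), Complex.ofReal_sum]
  exact sum_congr rfl fun a ha => Complex.norm_of_nonneg' (hz a ha)

lemma boxL1Le_latticeFourier {K : ℕ} [NeZero K] {ι : Type*} [Fintype ι] [DecidableEq ι]
    {f : (ι → ℤ) → ℂ} (hf : ∀ j, 0 ≤ latticeFourier K ι f j) :
    BoxL1Le K (K ^ Fintype.card ι * ‖f 0‖) (latticeFourier K ι f) := fun w => by
  rw [sum_norm_eq_norm_sum_of_nonneg fun x _ => hf _, sum_box_latticeFourier, norm_mul, norm_pow,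
    Complex.norm_natCast]

lemma gaugeFixing_partial_fraction {𝕜 : Type*} [Field 𝕜] {A M ξ : 𝕜} (h1 : A + M ^ 2 ≠ 0)
    (h2 : (1 - ξ) * A + M ^ 2 ≠ 0) (hM : M ≠ 0) :
    ξ * ((A + M ^ 2)⁻¹ * ((1 - ξ) * A + M ^ 2)⁻¹) =
      (M ^ 2)⁻¹ * ((A + M ^ 2)⁻¹ - (1 - ξ) * ((1 - ξ) * A + M ^ 2)⁻¹) := by
  linear_combination ((M ^ 2)⁻¹ * (A + M ^ 2)⁻¹) * mul_inv_cancel₀ h2 -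
    ((1 - ξ) * (M ^ 2)⁻¹ * ((1 - ξ) * A + M ^ 2)⁻¹) * mul_inv_cancel₀ h1 -
    (ξ * (A + M ^ 2)⁻¹ * ((1 - ξ) * A + M ^ 2)⁻¹) * mul_inv_cancel₀ (pow_ne_zero 2 hM)

noncomputable def bosonMomentum (a : ℝ) (K : ℕ) (m : Fin 4 → ℤ) : Fin 4 → ℝ :=
  fun ρ => 2 * π * (m ρ : ℝ) / ((K : ℝ) * a)

noncomputable def scalarPropagator (a : ℝ) (K : ℕ) (M c : ℝ) (m : Fin 4 → ℤ) : ℂ :=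
  ((c * latticeSigmaSq a (bosonMomentum a K m) + M ^ 2)⁻¹ : ℝ)

section GaugeCovariance

variable {a M ξ : ℝ} {K : ℕ} [NeZero K]

lemma latticeSigma_bosonMomentum (ha : a ≠ 0) (m : Fin 4 → ℤ) (ρ : Fin 4) :
    latticeSigma a (bosonMomentum a K m) ρ = (intChar K (m ρ) - 1) / a := by
  have hK : (K : ℂ) ≠ 0 := Nat.cast_ne_zero.2 (NeZero.ne K)
  rw [latticeSigma, intChar_apply, bosonMomentum]
  congr 3
  push_cast
  field_simp

lemma latticeSigmaSq_bosonMomentum (ha : a ≠ 0) (m : Fin 4 → ℤ) :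
    (latticeSigmaSq a (bosonMomentum a K m) : ℂ) = 2 / a ^ 2 * (4 - cosSum K m) := by
  have hterm (ρ : Fin 4) : (Complex.normSq (latticeSigma a (bosonMomentum a K m) ρ) : ℂ) =
      2 / a ^ 2 * (1 - (intChar K (m ρ) + intChar K (-m ρ)) / 2) := by
    rw [← Complex.mul_conj, latticeSigma_bosonMomentum ha, map_div₀, map_sub, map_one,
      Complex.conj_ofReal, ← intChar_neg]
    have := intChar_mul_intChar_neg (K := K) (m ρ)
    field_simp
    linear_combination this
  simp only [latticeSigmaSq, Complex.ofReal_sum, hterm, ← mul_sum, cosSum, sum_sub_distrib]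
  simp

lemma scalarPropagator_eq (ha : a ≠ 0) (c : ℝ) (m : Fin 4 → ℤ) :
    scalarPropagator a K M c m =
      ((8 * c / a ^ 2 + M ^ 2 : ℝ) - (2 * c / a ^ 2 : ℝ) * cosSum K m)⁻¹ := by
  rw [scalarPropagator, Complex.ofReal_inv, Complex.ofReal_add, Complex.ofReal_mul,
    latticeSigmaSq_bosonMomentum ha]
  push_cast
  ring

omit [NeZero K] in
lemma scalarPropagator_zero (c : ℝ) : scalarPropagator a K M c 0 = ((M ^ 2)⁻¹ : ℝ) := by
  simp [scalarPropagator, bosonMomentum, latticeSigmaSq, latticeSigma]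

lemma boxL1Le_latticeFourier_scalarPropagator (ha : a ≠ 0) (hM : 0 < M) {c : ℝ} (hc : 0 ≤ c) :
    BoxL1Le K (K ^ 4 / M ^ 2) (latticeFourier K (Fin 4) (scalarPropagator a K M c)) := by
  have hpos (j : Fin 4 → ℤ) : 0 ≤ latticeFourier K (Fin 4) (scalarPropagator a K M c) j := by
    rw [funext (scalarPropagator_eq ha c)]
    refine latticeFourier_inv_sub_cosSum_nonneg (by positivity) ?_ j
    rw [Fintype.card_fin]
    linarith [pow_pos hM 2, show 2 * c / a ^ 2 * (4 : ℕ) = 8 * c / a ^ 2 by push_cast; ring]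
  convert boxL1Le_latticeFourier hpos using 1
  rw [scalarPropagator_zero, Complex.norm_real, Real.norm_of_nonneg (by positivity),
    Fintype.card_fin, div_eq_mul_inv]

lemma covEntry_bosonMomentum (ha : a ≠ 0) (hM : 0 < M) (hξ : ξ < 1) (μ ν : Fin 4)
    (m : Fin 4 → ℤ) :
    covEntry a M ξ (bosonMomentum a K m) μ ν =
      (if μ = ν then 1 else 0) * scalarPropagator a K M 1 m +
        (((a * M) ^ 2)⁻¹ : ℝ) * ((intChar K (m ⬝ᵥ -Pi.single μ 1) - 1) *
          ((intChar K (m ⬝ᵥ Pi.single ν 1) - 1) *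
            (scalarPropagator a K M 1 m - (1 - ξ : ℝ) * scalarPropagator a K M (1 - ξ) m))) := by
  set A := latticeSigmaSq a (bosonMomentum a K m)
  have hA : 0 ≤ A := sum_nonneg fun ρ _ => Complex.normSq_nonneg _
  have h1 : 0 < A + M ^ 2 := by positivity
  have h2 : 0 < (1 - ξ) * A + M ^ 2 := by
    have := mul_nonneg (sub_nonneg.2 hξ.le) hA
    positivity
  have key := gaugeFixing_partial_fraction (A := (A : ℂ)) (M := M) (ξ := ξ)
    (by exact_mod_cast h1.ne') (by exact_mod_cast h2.ne') (Complex.ofReal_ne_zero.2 hM.ne')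
  rw [covEntry, scalarPropagator, scalarPropagator, dotProduct_neg, dotProduct_single,
    dotProduct_single, mul_one, mul_one, latticeSigma_bosonMomentum ha,
    latticeSigma_bosonMomentum ha, map_div₀, map_sub, map_one, Complex.conj_ofReal, ← intChar_neg]
  push_cast
  linear_combination ((intChar K (-m μ) - 1) * (intChar K (m ν) - 1) / (a : ℂ) ^ 2) * key

lemma latticeFourier_covEntry (ha : a ≠ 0) (hM : 0 < M) (hξ : ξ < 1) (μ ν : Fin 4) :
    latticeFourier K (Fin 4) (fun m => covEntry a M ξ (bosonMomentum a K m) μ ν) =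
      (if μ = ν then 1 else 0 : ℂ) • latticeFourier K (Fin 4) (scalarPropagator a K M 1) +
        ((((a * M) ^ 2)⁻¹ : ℝ) : ℂ) • Δ_[-Pi.single μ 1] (Δ_[Pi.single ν 1]
          (latticeFourier K (Fin 4) (scalarPropagator a K M 1) -
            ((1 - ξ : ℝ) : ℂ) • latticeFourier K (Fin 4) (scalarPropagator a K M (1 - ξ)))) := by
  have hsplit : (fun m => covEntry a M ξ (bosonMomentum a K m) μ ν) =
      (if μ = ν then 1 else 0 : ℂ) • scalarPropagator a K M 1 +
        ((((a * M) ^ 2)⁻¹ : ℝ) : ℂ) • fun m => (intChar K (m ⬝ᵥ -Pi.single μ 1) - 1) *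
          (fun m => (intChar K (m ⬝ᵥ Pi.single ν 1) - 1) *
            (scalarPropagator a K M 1 - ((1 - ξ : ℝ) : ℂ) • scalarPropagator a K M (1 - ξ)) m) m :=
    funext fun m => covEntry_bosonMomentum ha hM hξ μ ν m
  rw [hsplit, map_add, map_smul, map_smul, latticeFourier_intChar_sub_one_mul,
    latticeFourier_intChar_sub_one_mul, map_sub, map_smul]

lemma boxL1Le_latticeFourier_covEntry (ha : 0 < a) (hM : 0 < M) (hMa : 1 ≤ M * a) (hξ : ξ < 1)
    (μ ν : Fin 4) :
    BoxL1Le K ((9 - 4 * ξ) * (K ^ 4 / M ^ 2))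
      (latticeFourier K (Fin 4) fun m => covEntry a M ξ (bosonMomentum a K m) μ ν) := by
  have hG₁ := boxL1Le_latticeFourier_scalarPropagator (K := K) ha.ne' hM zero_le_one
  have hG := boxL1Le_latticeFourier_scalarPropagator (K := K) ha.ne' hM (sub_nonneg.2 hξ.le)
  rw [latticeFourier_covEntry ha.ne' hM hξ]
  refine ((hG₁.const_smul _).add
    ((((hG₁.sub (hG.const_smul _)).fwdDiff _).fwdDiff _).const_smul _)).mono ?_
  have hδ : ‖(if μ = ν then 1 else 0 : ℂ)‖ ≤ 1 := by split_ifs <;> simp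
  have hc : ‖((((a * M) ^ 2)⁻¹ : ℝ) : ℂ)‖ ≤ 1 := by
    rw [Complex.norm_real, Real.norm_of_nonneg (by positivity)]
    exact inv_le_one_of_one_le₀ (one_le_pow₀ (by linarith))
  rw [Complex.norm_real (1 - ξ), Real.norm_of_nonneg (sub_nonneg.2 hξ.le)]
  calc _ ≤ 1 * (K ^ 4 / M ^ 2) + 1 * (2 * (2 * (K ^ 4 / M ^ 2 + (1 - ξ) * (K ^ 4 / M ^ 2)))) := by
        gcongr
    _ = _ := by ring

lemma gaugeCov_eq_latticeFourier (ha : a ≠ 0) (μ ν : Fin 4) (x y : Fin 4 → Fin K) :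
    gaugeCov a K M ξ μ ν (fun ρ => a * (x ρ : ℝ)) (fun ρ => a * (y ρ : ℝ)) =
      ((((K : ℝ) * a) ^ 4)⁻¹ : ℝ) *
        latticeFourier K (Fin 4) (fun m => covEntry a M ξ (bosonMomentum a K m) μ ν)
          (fun ρ => x ρ + -(y ρ : ℤ)) := by
  have hK : (K : ℂ) ≠ 0 := Nat.cast_ne_zero.2 (NeZero.ne K)
  rw [gaugeCov, latticeFourier_apply]
  push_cast
  congr 1
  refine sum_congr rfl fun m _ => ?_
  rw [intChar_apply]
  congr 2
  simp only [dotProduct, Int.cast_sum, Int.cast_mul, Int.cast_add, Int.cast_neg, Int.cast_natCast,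
    mul_sum, sum_div]
  refine sum_congr rfl fun ρ _ => ?_
  field_simp
  ring

end GaugeCovariance

theorem gaugeCov_l1_bound_general (ξ : ℝ) (hξ1 : ξ < 1) :
    ∃ C : ℝ, 0 < C ∧
      ∀ (a : ℝ), 0 < a → ∀ (K : ℕ), 1 ≤ K → ∀ (M : ℝ), 0 < M → 1 ≤ M * a →
      ∀ (my : Fin 4 → Fin K) (μ ν : Fin 4),
        a ^ 4 * ∑ mx : Fin 4 → Fin K,
            ‖(gaugeCov a K M ξ μ ν (fun ρ => a * (mx ρ : ℝ)) (fun ρ => a * (my ρ : ℝ)))‖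
          ≤ C / M ^ 2 := by
  refine ⟨9 - 4 * ξ, by linarith, fun a ha K hK M hM hMa my μ ν => ?_⟩
  have : NeZero K := ⟨by omega⟩
  simp_rw [gaugeCov_eq_latticeFourier ha.ne', norm_mul, Complex.norm_real,
    Real.norm_of_nonneg (by positivity : (0 : ℝ) ≤ (((K : ℝ) * a) ^ 4)⁻¹), ← mul_sum]
  calc _ ≤ a ^ 4 * ((((K : ℝ) * a) ^ 4)⁻¹ * ((9 - 4 * ξ) * (K ^ 4 / M ^ 2))) := by
        gcongr
        exact boxL1Le_latticeFourier_covEntry ha hM hMa hξ1 μ ν fun ρ => -(my ρ : ℤ)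
    _ = (9 - 4 * ξ) / M ^ 2 := by field_simp

/-- ℓ¹ bound on the gauge covariance: `a⁴ ∑_{x ∈ Λ} |g^A_{μν}(x,y)| ≤ C_ξ M⁻²`, with `C_ξ`
depending only on the gauge-fixing parameter `ξ`, uniformly in `y ∈ Λ = aℤ⁴ ∩ [0,L)⁴`,
in `μ, ν` and in `L = Ka`, for `M a ≥ 1`. -/
theorem gaugeCov_l1_bound (ξ : ℝ) (hξ0 : 0 ≤ ξ) (hξ1 : ξ < 1) :
    ∃ C : ℝ, 0 < C ∧
      ∀ (a : ℝ), 0 < a → ∀ (K : ℕ), 1 ≤ K → ∀ (M : ℝ), 0 < M → 1 ≤ M * a →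
      ∀ (my : Fin 4 → Fin K) (μ ν : Fin 4),
        a ^ 4 * ∑ mx : Fin 4 → Fin K,
            ‖(gaugeCov a K M ξ μ ν (fun ρ => a * (mx ρ : ℝ)) (fun ρ => a * (my ρ : ℝ)))‖
          ≤ C / M ^ 2 :=
  gaugeCov_l1_bound_general ξ hξ1
end

section
/- Let θ ∈ (0,1], c ∈ ℝ, C₀ ≥ 0 and δ > 0. Let ε denote the totally antisymmetric symbol on {0,1,2,3}^4 with ε_{0123} = 1. For each triple of indices μ,ν,σ ∈ {0,1,2,3}, suppose given real numbers R_{μνσ} and, for each ρ ∈ {0,1,2,3} and each a ∈ {1,2}, real numbers D^{(a)}_{ρ,μνσ} (playing the roles of R_{μνσ}(0,0) and ∂R_{μνσ}/∂p_{a,ρ}(0,0)), such that for all p_1, p_2 ∈ ℝ^4 with |p_1|, |p_2| ≤ δ and all μ, σ: | (c/(6π²)) Σ_{α,β} p_{1,α} p_{2,β} ε_{αβμσ} + Σ_ν p_{1,ν} ( R_{μνσ} + Σ_{ρ} p_{1,ρ} D^{(1)}_{ρ,μνσ} + Σ_{ρ} p_{2,ρ} D^{(2)}_{ρ,μνσ}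 ) | ≤ C₀ · max(|p_1|,|p_2|)^{2+θ}. Then: (i) R_{μνσ} = 0 for all μ,ν,σ; (ii) D^{(2)}_{β,μνσ} = -(c/(6π²)) ε_{νβμσ} for all μ,ν,σ,β; and (iii) D^{(1)}_{ρ,μνσ} + D^{(1)}_{ν,μρσ} = 0 for all μ,ν,ρ,σ. -/
/-! Substituting `p₁ = t u`, `p₂ = t v` turns the Ward combination into `t a(u) + t² b(u, v)`,
with `a` linear in `u` (coefficients `R`) and `b` made of the anomaly term and the first-order
Taylor coefficients `D`. A bound `O(t^{2+θ})` with `θ > 0` forces `a = b = 0` in every direction.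
Evaluating at basis vectors gives `R = 0` and `D⁽²⁾`, and the vanishing of the quadratic form
`u ↦ b(u, 0)` makes `D⁽¹⁾` antisymmetric. -/

open scoped Real

/-- The totally antisymmetric Levi-Civita symbol on `{0,1,2,3}⁴`, with `ε_{0123} = 1`. -/
noncomputable def eps4 (i j k l : Fin 4) : ℝ :=
  if h : Function.Bijective ![i, j, k, l] then
    ((Equiv.Perm.sign (Equiv.ofBijective _ h : Equiv.Perm (Fin 4)) : ℤ) : ℝ)
  else 0

open Filter Topology

lemma eq_zero_of_tendsto_of_abs_le_rpow {f : ℝ → ℝ} {X K θ : ℝ} (hθ : 0 < θ)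
    (hf : Tendsto f (𝓝[>] 0) (𝓝 X)) (hb : ∀ᶠ t in 𝓝[>] 0, |f t| ≤ K * t ^ θ) : X = 0 := by
  have hK : Tendsto (fun t : ℝ => K * t ^ θ) (𝓝[>] 0) (𝓝 0) := by
    have : Tendsto (fun t : ℝ => K * t ^ θ) (𝓝[>] 0) (𝓝 (K * 0 ^ θ)) :=
      ((Real.continuousAt_rpow_const 0 θ (Or.inr hθ.le)).tendsto.mono_left
        nhdsWithin_le_nhds).const_mul K
    rwa [Real.zero_rpow hθ.ne', mul_zero] at this
  exact abs_nonpos_iff.mp (le_of_tendsto_of_tendsto hf.abs hK hb)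

lemma eq_zero_of_abs_linear_add_quadratic_le {a b K θ : ℝ} (hθ : 0 < θ)
    (h : ∀ᶠ t in 𝓝[>] 0, |t * a + t ^ 2 * b| ≤ K * t ^ (2 + θ)) : a = 0 ∧ b = 0 := by
  have ha : a = 0 := by
    refine eq_zero_of_tendsto_of_abs_le_rpow (f := fun t => a + t * b) (K := K) (θ := 1 + θ)
      (by linarith) ?_ ?_
    · have : Continuous fun t : ℝ => a + t * b := by fun_prop
      simpa using (this.tendsto 0).mono_left nhdsWithin_le_nhds
    · filter_upwards [h, self_mem_nhdsWithin] with t ht (ht0 : 0 < t)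
      rw [show (2 : ℝ) + θ = 1 + θ + 1 by ring, Real.rpow_add ht0, Real.rpow_one] at ht
      rw [show t * a + t ^ 2 * b = t * (a + t * b) by ring, abs_mul, abs_of_pos ht0] at ht
      nlinarith
  subst ha
  refine ⟨rfl, eq_zero_of_tendsto_of_abs_le_rpow (f := fun _ => b) (K := K) hθ
    tendsto_const_nhds ?_⟩
  filter_upwards [h, self_mem_nhdsWithin] with t ht (ht0 : 0 < t)
  rw [Real.rpow_add ht0, Real.rpow_two, mul_zero, zero_add, abs_mul,
    abs_of_pos (by positivity)] at ht
  nlinarith [pow_pos ht0 2]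

section
variable {ι : Type*} [Fintype ι]

lemma sqrt_sum_sq_smul {t : ℝ} (ht : 0 ≤ t) (u : ι → ℝ) :
    √(∑ i, (t • u) i ^ 2) = t * √(∑ i, u i ^ 2) := by
  simp only [Pi.smul_apply, smul_eq_mul, mul_pow, ← Finset.mul_sum]
  rw [Real.sqrt_mul (sq_nonneg t), Real.sqrt_sq ht]

lemma eventually_abs_le_of_bound_near_zero {W : (ι → ℝ) → (ι → ℝ) → ℝ} {C δ s : ℝ} (hδ : 0 < δ)
    (hW : ∀ p q : ι → ℝ, √(∑ i, p i ^ 2) ≤ δ → √(∑ i, q i ^ 2) ≤ δ →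
      |W p q| ≤ C * max √(∑ i, p i ^ 2) √(∑ i, q i ^ 2) ^ s) (u v : ι → ℝ) :
    ∀ᶠ t in 𝓝[>] 0,
      |W (t • u) (t • v)| ≤ C * max √(∑ i, u i ^ 2) √(∑ i, v i ^ 2) ^ s * t ^ s := by
  set M := max √(∑ i, u i ^ 2) √(∑ i, v i ^ 2)
  have hsmall : ∀ᶠ t in 𝓝 (0 : ℝ), t * M ≤ δ := by
    have : Tendsto (fun t : ℝ => t * M) (𝓝 0) (𝓝 0) := by
      simpa using (tendsto_id (x := 𝓝 (0 : ℝ))).mul_const M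
    exact this.eventually (eventually_le_nhds hδ)
  filter_upwards [nhdsWithin_le_nhds hsmall, self_mem_nhdsWithin] with t ht (ht0 : 0 < t)
  have hM : 0 ≤ M := le_max_of_le_left (Real.sqrt_nonneg _)
  have hu : t * √(∑ i, u i ^ 2) ≤ t * M := mul_le_mul_of_nonneg_left (le_max_left _ _) ht0.le
  have hv : t * √(∑ i, v i ^ 2) ≤ t * M := mul_le_mul_of_nonneg_left (le_max_right _ _) ht0.le
  have := hW (t • u) (t • v) (by rw [sqrt_sum_sq_smul ht0.le]; linarith)
    (by rw [sqrt_sum_sq_smul ht0.le]; linarith)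
  rwa [sqrt_sum_sq_smul ht0.le, sqrt_sum_sq_smul ht0.le, ← mul_max_of_nonneg _ _ ht0.le,
    Real.mul_rpow ht0.le hM, mul_comm (t ^ s), ← mul_assoc] at this

/-- For fixed `μ, σ`, `wardForm (c / 6π²) ε_{··μσ} R_{μ·σ} D⁽¹⁾_{·,μ·σ} D⁽²⁾_{·,μ·σ} p₁ p₂` is the
Ward combination bounded in `anomaly_algebraic_core`. -/
def wardForm (c : ℝ) (E : ι → ι → ℝ) (r : ι → ℝ) (A A' : ι → ι → ℝ) (p q : ι → ℝ) : ℝ :=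
  c * (∑ α, ∑ β, p α * q β * E α β) +
    ∑ ν, p ν * (r ν + (∑ ρ, p ρ * A ρ ν) + (∑ ρ, q ρ * A' ρ ν))

lemma wardForm_smul (c : ℝ) (E : ι → ι → ℝ) (r : ι → ℝ) (A A' : ι → ι → ℝ) (u v : ι → ℝ)
    (t : ℝ) :
    wardForm c E r A A' (t • u) (t • v) = t * ∑ ν, u ν * r ν +
      t ^ 2 * (c * (∑ α, ∑ β, u α * v β * E α β) +
        ∑ ν, u ν * ((∑ ρ, u ρ * A ρ ν) + (∑ ρ, v ρ * A' ρ ν))) := by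
  simp only [wardForm, Pi.smul_apply, smul_eq_mul, mul_add, Finset.mul_sum,
    Finset.sum_add_distrib]
  ring_nf

lemma add_eq_zero_of_sum_mul_sum_eq_zero [DecidableEq ι] {A : ι → ι → ℝ}
    (h : ∀ u : ι → ℝ, ∑ ν, u ν * ∑ ρ, u ρ * A ρ ν = 0) (ρ ν : ι) : A ρ ν + A ν ρ = 0 := by
  have hρν := h (Pi.single ρ 1 + Pi.single ν 1)
  have hρ := h (Pi.single ρ 1)
  have hν := h (Pi.single ν 1)
  simp only [Pi.add_apply, Pi.single_apply, add_mul, mul_add, ite_mul, one_mul, zero_mul,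
    Finset.sum_add_distrib, Finset.sum_ite_eq', Finset.mem_univ, ↓reduceIte] at hρν hρ hν
  linarith

theorem wardForm_coeffs [DecidableEq ι] {c C δ θ : ℝ} {E : ι → ι → ℝ} {r : ι → ℝ}
    {A A' : ι → ι → ℝ} (hθ : 0 < θ) (hδ : 0 < δ)
    (hW : ∀ p q : ι → ℝ, √(∑ i, p i ^ 2) ≤ δ → √(∑ i, q i ^ 2) ≤ δ →
      |wardForm c E r A A' p q| ≤ C * max √(∑ i, p i ^ 2) √(∑ i, q i ^ 2) ^ (2 + θ)) :
    r = 0 ∧ (∀ ν β, A' β ν = -c * E ν β) ∧ ∀ ρ ν, A ρ ν + A ν ρ = 0 := by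
  have hcoeff (u v : ι → ℝ) := eq_zero_of_abs_linear_add_quadratic_le hθ
    (by simpa only [wardForm_smul] using eventually_abs_le_of_bound_near_zero hδ hW u v)
  have hA : ∀ ρ ν, A ρ ν + A ν ρ = 0 :=
    add_eq_zero_of_sum_mul_sum_eq_zero fun u => by simpa using (hcoeff u 0).2
  refine ⟨funext fun ν => ?_, fun ν β => ?_, hA⟩
  · simpa only [Pi.zero_apply, Pi.single_apply, ite_mul, one_mul, zero_mul, Finset.sum_ite_eq',
      Finset.mem_univ, ↓reduceIte] using (hcoeff (Pi.single ν 1) 0).1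
  · -- at `u = e_ν, v = e_β` the quadratic coefficient is `c E ν β + A ν ν + A' β ν`
    have hνβ := (hcoeff (Pi.single ν 1) (Pi.single β 1)).2
    simp only [Pi.single_apply, mul_ite, mul_one, mul_zero, ite_mul, one_mul, zero_mul,
      Finset.sum_ite_eq', Finset.mem_univ, ↓reduceIte] at hνβ
    linarith [hA ν ν]
end

theorem anomaly_algebraic_core_general (θ : ℝ) (hθ0 : 0 < θ) (c : ℝ)
    (C₀ : ℝ) (δ : ℝ) (hδ : 0 < δ)
    (R : Fin 4 → Fin 4 → Fin 4 → ℝ)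
    (D : Fin 2 → Fin 4 → Fin 4 → Fin 4 → Fin 4 → ℝ)
    (hbound : ∀ p₁ p₂ : Fin 4 → ℝ,
      Real.sqrt (∑ i : Fin 4, (p₁ i) ^ 2) ≤ δ →
      Real.sqrt (∑ i : Fin 4, (p₂ i) ^ 2) ≤ δ →
      ∀ μ σ : Fin 4,
        |c / (6 * π ^ 2) *
            (∑ α : Fin 4, ∑ β : Fin 4, p₁ α * p₂ β * eps4 α β μ σ) +
          ∑ ν : Fin 4, p₁ ν *
            (R μ ν σ + (∑ ρ : Fin 4, p₁ ρ * D 0 ρ μ ν σ) +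
              (∑ ρ : Fin 4, p₂ ρ * D 1 ρ μ ν σ))| ≤
          C₀ * (max (Real.sqrt (∑ i : Fin 4, (p₁ i) ^ 2))
                    (Real.sqrt (∑ i : Fin 4, (p₂ i) ^ 2))) ^ (2 + θ)) :
    (∀ μ ν σ : Fin 4, R μ ν σ = 0) ∧
    (∀ μ ν σ β : Fin 4, D 1 β μ ν σ = -(c / (6 * π ^ 2)) * eps4 ν β μ σ) ∧
    (∀ μ ν ρ σ : Fin 4, D 0 ρ μ ν σ + D 0 ν μ ρ σ = 0) := by
  have key (μ σ : Fin 4) := wardForm_coeffs (C := C₀) hθ0 hδ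
    fun p q hp hq => hbound p q hp hq μ σ
  exact ⟨fun μ ν σ => congrFun (key μ σ).1 ν, fun μ ν σ β => (key μ σ).2.1 ν β,
    fun μ ν ρ σ => (key μ σ).2.2 ρ ν⟩

/-- **Algebraic core of the anomaly computation.** If the Ward-identity combination
`(c/6π²) ∑ p₁ₐ p₂ᵦ ε_{αβμσ} + ∑_ν p₁ν (R_{μνσ} + ∑_ρ p₁ρ D⁽¹⁾ + ∑_ρ p₂ρ D⁽²⁾)` is
`O(max(|p₁|,|p₂|)^{2+θ})` for all small `p₁, p₂`, then `R = 0`,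
`D⁽²⁾_{β,μνσ} = -(c/6π²) ε_{νβμσ}` and `D⁽¹⁾` is antisymmetric in `(ρ,ν)`. -/
theorem anomaly_algebraic_core (θ : ℝ) (hθ0 : 0 < θ) (hθ1 : θ ≤ 1) (c : ℝ)
    (C₀ : ℝ) (hC₀ : 0 ≤ C₀) (δ : ℝ) (hδ : 0 < δ)
    (R : Fin 4 → Fin 4 → Fin 4 → ℝ)
    (D : Fin 2 → Fin 4 → Fin 4 → Fin 4 → Fin 4 → ℝ)
    (hbound : ∀ p₁ p₂ : Fin 4 → ℝ,
      Real.sqrt (∑ i : Fin 4, (p₁ i) ^ 2) ≤ δ →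
      Real.sqrt (∑ i : Fin 4, (p₂ i) ^ 2) ≤ δ →
      ∀ μ σ : Fin 4,
        |c / (6 * π ^ 2) *
            (∑ α : Fin 4, ∑ β : Fin 4, p₁ α * p₂ β * eps4 α β μ σ) +
          ∑ ν : Fin 4, p₁ ν *
            (R μ ν σ + (∑ ρ : Fin 4, p₁ ρ * D 0 ρ μ ν σ) +
              (∑ ρ : Fin 4, p₂ ρ * D 1 ρ μ ν σ))| ≤
          C₀ * (max (Real.sqrt (∑ i : Fin 4, (p₁ i) ^ 2))
                    (Real.sqrt (∑ i : Fin 4, (p₂ i) ^ 2))) ^ (2 + θ)) :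
    (∀ μ ν σ : Fin 4, R μ ν σ = 0) ∧
    (∀ μ ν σ β : Fin 4, D 1 β μ ν σ = -(c / (6 * π ^ 2)) * eps4 ν β μ σ) ∧
    (∀ μ ν ρ σ : Fin 4, D 0 ρ μ ν σ + D 0 ν μ ρ σ = 0) :=
  anomaly_algebraic_core_general θ hθ0 c C₀ δ hδ R D hbound
end
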